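/- arXiv:2007.15623 — 3 statements merged into one kernel-verified Lean document; each statement's English description precedes it below -/
import Mathlib

section
/- The generalized Barron space B_{X,K}, equipped with the norm ‖·‖_{X,K}, is a Banach space, i.e. a complete normed vector space. -/
open MeasureTheory Set Filter Topology
open scoped ENNReal NNReal Classical

noncomputable section

/-- The rectified linear unit. -/
def relu (z : ℝ) : ℝ := max z 0

/-- The Borel σ-algebra on `C(K, ℝ)` for the topology of uniform convergence
(= compact-open topology for compact `K`). -/
instance ctsMeasurableSpace {d : ℕ} (K : Set (Fin d → ℝ)) : MeasurableSpace C(K, ℝ) := borel _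

/-- `(μp, μn)` is a (Jordan-decomposed) signed-measure representation of `f` over the
class `H ⊆ C(K, ℝ)`: both parts are finite measures concentrated on `H`, and
`f x = ∫ relu (g x) dμp - ∫ relu (g x) dμn` for every `x ∈ K`. -/
def IsBarronRep {d : ℕ} (K : Set (Fin d → ℝ)) (H : Set C(K, ℝ)) (f : C(K, ℝ))
    (μp μn : Measure C(K, ℝ)) : Prop :=
  IsFiniteMeasure μp ∧ IsFiniteMeasure μn ∧ μp Hᶜ = 0 ∧ μn Hᶜ = 0 ∧
    ∀ x : K, f x = (∫ g : C(K, ℝ), relu (g x) ∂μp) - ∫ g : C(K, ℝ), relu (g x) ∂μn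

/-- The generalized Barron norm `‖f‖_{X,K}`, where `H` plays the role of the closed unit
ball `B^X` (realized inside `C(K,ℝ)`): the infimum of the total variation mass over all
signed-measure representations of `f`. -/
def barronNorm {d : ℕ} (K : Set (Fin d → ℝ)) (H : Set C(K, ℝ)) (f : C(K, ℝ)) : ℝ≥0∞ :=
  ⨅ p : {p : Measure C(K, ℝ) × Measure C(K, ℝ) // IsBarronRep K H f p.1 p.2},
    p.1.1 Set.univ + p.1.2 Set.univ

end

set_option synthInstance.maxHeartbeats 1000000
set_option maxHeartbeats 1000000
set_option linter.deprecated false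

section Aux

variable {d : ℕ} {K : Set (Fin d → ℝ)} {H : Set C(K, ℝ)} {C₁ : ℝ}

instance borelCts {d : ℕ} (K : Set (Fin d → ℝ)) : BorelSpace C(K, ℝ) := ⟨rfl⟩

lemma relu_nonneg (z : ℝ) : 0 ≤ relu z := le_max_right _ _

lemma abs_relu_le (z : ℝ) : |relu z| ≤ |z| := by
  rw [abs_of_nonneg (relu_nonneg z)]
  exact max_le (le_abs_self z) (abs_nonneg z)

lemma continuous_relu_eval (x : K) : Continuous fun g : C(K, ℝ) => relu (g x) :=
  (continuous_eval_const x).max continuous_const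

lemma ae_mem_of_compl_zero {μ : Measure C(K, ℝ)} (hμ : μ Hᶜ = 0) : ∀ᵐ g ∂μ, g ∈ H := by
  rw [ae_iff]; exact hμ

lemma ae_relu_bound (hH : ∀ g ∈ H, ∀ x : K, |g x| ≤ C₁) {μ : Measure C(K, ℝ)}
    (hμ : μ Hᶜ = 0) (x : K) : ∀ᵐ g ∂μ, ‖relu (g x)‖ ≤ C₁ := by
  filter_upwards [ae_mem_of_compl_zero hμ] with g hg
  exact le_trans (abs_relu_le _) (hH g hg x)

lemma integrable_relu (hH : ∀ g ∈ H, ∀ x : K, |g x| ≤ C₁) {μ : Measure C(K, ℝ)}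
    [IsFiniteMeasure μ] (hμ : μ Hᶜ = 0) (x : K) :
    Integrable (fun g : C(K, ℝ) => relu (g x)) μ :=
  ⟨(continuous_relu_eval x).aestronglyMeasurable,
    HasFiniteIntegral.of_bounded (ae_relu_bound hH hμ x)⟩

lemma integral_relu_le (hH : ∀ g ∈ H, ∀ x : K, |g x| ≤ C₁) {μ : Measure C(K, ℝ)}
    [IsFiniteMeasure μ] (hμ : μ Hᶜ = 0) (x : K) :
    |∫ g : C(K, ℝ), relu (g x) ∂μ| ≤ C₁ * (μ univ).toReal :=
  norm_integral_le_of_norm_le_const (ae_relu_bound hH hμ x)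

lemma barronNorm_le_of_rep {f : C(K, ℝ)} {μp μn : Measure C(K, ℝ)}
    (h : IsBarronRep K H f μp μn) : barronNorm K H f ≤ μp univ + μn univ :=
  iInf_le (fun p : {p : Measure C(K, ℝ) × Measure C(K, ℝ) // IsBarronRep K H f p.1 p.2} =>
    p.1.1 univ + p.1.2 univ) ⟨(μp, μn), h⟩

lemma exists_rep_of_lt {f : C(K, ℝ)} {a : ℝ≥0∞} (h : barronNorm K H f < a) :
    ∃ μp μn : Measure C(K, ℝ), IsBarronRep K H f μp μn ∧ μp univ + μn univ < a := by
  rw [barronNorm, iInf_lt_iff] at h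
  obtain ⟨⟨⟨μp, μn⟩, hrep⟩, hlt⟩ := h
  exact ⟨μp, μn, hrep, hlt⟩

lemma barronNorm_zero : barronNorm K H (0 : C(K, ℝ)) = 0 := by
  have h : IsBarronRep K H (0 : C(K, ℝ)) 0 0 := by
    refine ⟨inferInstance, inferInstance, rfl, rfl, fun x => by simp⟩
  simpa using barronNorm_le_of_rep h

end Aux

section Aux2

variable {d : ℕ} {K : Set (Fin d → ℝ)} {H : Set C(K, ℝ)} {C₁ : ℝ}

lemma pointwise_bound (hH : ∀ g ∈ H, ∀ x : K, |g x| ≤ C₁) {f : C(K, ℝ)}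
    {μp μn : Measure C(K, ℝ)} (h : IsBarronRep K H f μp μn) (x : K) :
    |f x| ≤ C₁ * (μp univ + μn univ).toReal := by
  obtain ⟨h1, h2, h3, h4, h5⟩ := h
  haveI := h1; haveI := h2
  calc |f x| ≤ |∫ g : C(K, ℝ), relu (g x) ∂μp| + |∫ g : C(K, ℝ), relu (g x) ∂μn| := by
        rw [h5 x]; exact abs_sub _ _
    _ ≤ C₁ * (μp univ).toReal + C₁ * (μn univ).toReal :=
        add_le_add (integral_relu_le hH h3 x) (integral_relu_le hH h4 x)
    _ = C₁ * (μp univ + μn univ).toReal := by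
        rw [ENNReal.toReal_add (measure_ne_top μp _) (measure_ne_top μn _), mul_add]

lemma ofReal_pointwise_le (hC₁pos : 0 < C₁) (hH : ∀ g ∈ H, ∀ x : K, |g x| ≤ C₁)
    (f : C(K, ℝ)) (x : K) :
    ENNReal.ofReal |f x| ≤ ENNReal.ofReal C₁ * barronNorm K H f := by
  rw [barronNorm, ENNReal.mul_iInf' (by simp [ENNReal.ofReal_ne_top]) ?h0]
  · refine le_iInf fun p => ?_
    have hb := pointwise_bound hH p.2 x
    haveI := p.2.1; haveI := p.2.2.1
    have hmass : p.1.1 univ + p.1.2 univ ≠ ⊤ :=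
      ENNReal.add_ne_top.2 ⟨measure_ne_top _ _, measure_ne_top _ _⟩
    calc ENNReal.ofReal |f x| ≤ ENNReal.ofReal (C₁ * (p.1.1 univ + p.1.2 univ).toReal) :=
          ENNReal.ofReal_le_ofReal hb
      _ = ENNReal.ofReal C₁ * (p.1.1 univ + p.1.2 univ) := by
          rw [ENNReal.ofReal_mul hC₁pos.le, ENNReal.ofReal_toReal hmass]
  · intro h; exact absurd h (by simp [hC₁pos])

lemma rep_add (hH : ∀ g ∈ H, ∀ x : K, |g x| ≤ C₁) {f₁ f₂ : C(K, ℝ)}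
    {μp₁ μn₁ μp₂ μn₂ : Measure C(K, ℝ)}
    (h₁ : IsBarronRep K H f₁ μp₁ μn₁) (h₂ : IsBarronRep K H f₂ μp₂ μn₂) :
    IsBarronRep K H (f₁ + f₂) (μp₁ + μp₂) (μn₁ + μn₂) := by
  obtain ⟨i1, i2, z1, z2, e1⟩ := h₁
  obtain ⟨j1, j2, w1, w2, e2⟩ := h₂
  haveI := i1; haveI := i2; haveI := j1; haveI := j2
  refine ⟨inferInstance, inferInstance, by simp [Measure.add_apply, z1, w1],
    by simp [Measure.add_apply, z2, w2], fun x => ?_⟩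
  rw [ContinuousMap.add_apply, e1 x, e2 x,
    integral_add_measure (integrable_relu hH z1 x) (integrable_relu hH w1 x),
    integral_add_measure (integrable_relu hH z2 x) (integrable_relu hH w2 x)]
  ring

lemma barronNorm_add_le (hH : ∀ g ∈ H, ∀ x : K, |g x| ≤ C₁) (f₁ f₂ : C(K, ℝ)) :
    barronNorm K H (f₁ + f₂) ≤ barronNorm K H f₁ + barronNorm K H f₂ := by
  conv_rhs => rw [barronNorm, barronNorm, ENNReal.iInf_add]
  refine le_iInf fun p => ?_
  rw [ENNReal.add_iInf]
  refine le_iInf fun q => ?_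
  have := barronNorm_le_of_rep (rep_add hH p.2 q.2)
  refine this.trans (le_of_eq ?_)
  simp only [Measure.add_apply]; ring

lemma rep_neg {f : C(K, ℝ)} {μp μn : Measure C(K, ℝ)} (h : IsBarronRep K H f μp μn) :
    IsBarronRep K H (-f) μn μp := by
  obtain ⟨i1, i2, z1, z2, e1⟩ := h
  exact ⟨i2, i1, z2, z1, fun x => by rw [ContinuousMap.neg_apply, e1 x]; ring⟩

lemma rep_smul {c : ℝ} (hc : 0 ≤ c) {f : C(K, ℝ)} {μp μn : Measure C(K, ℝ)}
    (h : IsBarronRep K H f μp μn) :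
    IsBarronRep K H (c • f) (ENNReal.ofReal c • μp) (ENNReal.ofReal c • μn) := by
  obtain ⟨i1, i2, z1, z2, e1⟩ := h
  haveI := i1; haveI := i2
  refine ⟨⟨?_⟩, ⟨?_⟩, ?_, ?_, fun x => ?_⟩
  · rw [Measure.smul_apply, smul_eq_mul]
    exact ENNReal.mul_lt_top ENNReal.ofReal_lt_top (measure_lt_top _ _)
  · rw [Measure.smul_apply, smul_eq_mul]
    exact ENNReal.mul_lt_top ENNReal.ofReal_lt_top (measure_lt_top _ _)
  · rw [Measure.smul_apply, smul_eq_mul, z1, mul_zero]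
  · rw [Measure.smul_apply, smul_eq_mul, z2, mul_zero]
  · rw [ContinuousMap.smul_apply, e1 x, integral_smul_measure, integral_smul_measure,
      ENNReal.toReal_ofReal hc, smul_eq_mul, smul_eq_mul, smul_eq_mul]
    ring

end Aux2

section Aux3

variable {d : ℕ} {K : Set (Fin d → ℝ)} {H : Set C(K, ℝ)} {C₁ : ℝ}

lemma ofReal_eq_nnnorm {c : ℝ} (hc : 0 ≤ c) : ENNReal.ofReal c = (‖c‖₊ : ℝ≥0∞) := by
  rw [ENNReal.ofReal_eq_coe_nnreal hc]
  congr 1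
  simp [Real.nnnorm_of_nonneg hc]

lemma barronNorm_smul_le (c : ℝ) (f : C(K, ℝ)) :
    barronNorm K H (c • f) ≤ (‖c‖₊ : ℝ≥0∞) * barronNorm K H f := by
  rcases eq_or_ne c 0 with rfl | hc
  · simp [barronNorm_zero]
  · conv_rhs => rw [barronNorm]
    rw [ENNReal.mul_iInf_of_ne (by simp [hc]) ENNReal.coe_ne_top]
    refine le_iInf fun p => ?_
    rcases le_or_gt 0 c with hc0 | hc0
    · have h := barronNorm_le_of_rep (rep_smul hc0 p.2)
      refine h.trans (le_of_eq ?_)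
      simp only [Measure.smul_apply, smul_eq_mul]
      rw [← mul_add, ofReal_eq_nnnorm hc0]
    · have hcc : (0:ℝ) ≤ -c := by linarith
      have key : IsBarronRep K H (c • f)
          (ENNReal.ofReal (-c) • (p.1.2 : Measure C(K, ℝ))) (ENNReal.ofReal (-c) • p.1.1) := by
        have h := rep_neg (rep_smul hcc p.2)
        rwa [neg_smul, neg_neg] at h
      have h := barronNorm_le_of_rep key
      refine h.trans (le_of_eq ?_)
      simp only [Measure.smul_apply, smul_eq_mul]
      rw [← mul_add, ofReal_eq_nnnorm hcc, nnnorm_neg, add_comm]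

lemma barronNorm_smul (c : ℝ) (f : C(K, ℝ)) :
    barronNorm K H (c • f) = (‖c‖₊ : ℝ≥0∞) * barronNorm K H f := by
  rcases eq_or_ne c 0 with rfl | hc
  · simp [barronNorm_zero]
  · refine le_antisymm (barronNorm_smul_le c f) ?_
    have h := barronNorm_smul_le (H := H) c⁻¹ (c • f)
    rw [smul_smul, inv_mul_cancel₀ hc, one_smul] at h
    calc (‖c‖₊ : ℝ≥0∞) * barronNorm K H f
        ≤ (‖c‖₊ : ℝ≥0∞) * ((‖c⁻¹‖₊ : ℝ≥0∞) * barronNorm K H (c • f)) :=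
          mul_le_mul_right h _
      _ = barronNorm K H (c • f) := by
          rw [← mul_assoc, ← ENNReal.coe_mul, ← nnnorm_mul, mul_inv_cancel₀ hc]
          simp

lemma barronNorm_neg (f : C(K, ℝ)) : barronNorm K H (-f) = barronNorm K H f := by
  have := barronNorm_smul (H := H) (-1 : ℝ) f
  simpa using this

lemma barronNorm_eq_zero (hC₁pos : 0 < C₁) (hH : ∀ g ∈ H, ∀ x : K, |g x| ≤ C₁)
    {f : C(K, ℝ)} (h : barronNorm K H f = 0) : f = 0 := by
  ext x
  have hb := ofReal_pointwise_le hC₁pos hH f x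
  rw [h, mul_zero, nonpos_iff_eq_zero, ENNReal.ofReal_eq_zero] at hb
  have := abs_nonneg (f x)
  have : |f x| = 0 := le_antisymm hb this
  simpa [abs_eq_zero] using this

end Aux3

section Aux4

variable {d : ℕ} {K : Set (Fin d → ℝ)} {H : Set C(K, ℝ)} {C₁ : ℝ}

lemma lintegral_nnnorm_relu_le (hC₁pos : 0 < C₁) (hH : ∀ g ∈ H, ∀ x : K, |g x| ≤ C₁)
    {μ : Measure C(K, ℝ)} (hμ : μ Hᶜ = 0) (x : K) :
    (∫⁻ g : C(K, ℝ), (‖relu (g x)‖₊ : ℝ≥0∞) ∂μ) ≤ ENNReal.ofReal C₁ * μ univ := by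
  calc (∫⁻ g : C(K, ℝ), (‖relu (g x)‖₊ : ℝ≥0∞) ∂μ)
      ≤ ∫⁻ _ : C(K, ℝ), ENNReal.ofReal C₁ ∂μ := by
        refine lintegral_mono_ae ?_
        filter_upwards [ae_relu_bound hH hμ x] with g hg
        rw [ofReal_eq_nnnorm hC₁pos.le, ENNReal.coe_le_coe, ← NNReal.coe_le_coe,
          coe_nnnorm, coe_nnnorm, Real.norm_of_nonneg hC₁pos.le]
        exact hg
    _ = ENNReal.ofReal C₁ * μ univ := lintegral_const _

lemma rep_sum_le (hC₁pos : 0 < C₁) (hH : ∀ g ∈ H, ∀ x : K, |g x| ≤ C₁)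
    (hHm : MeasurableSet H) (h : ℕ → C(K, ℝ)) (g : C(K, ℝ))
    (hlim : ∀ x : K, Tendsto (fun k => h k x) atTop (𝓝 (g x)))
    (μp μn : ℕ → Measure C(K, ℝ))
    (hrep : ∀ k, IsBarronRep K H (h (k + 1) - h k) (μp k) (μn k))
    (hM : (∑' k, (μp k univ + μn k univ)) ≠ ⊤) :
    barronNorm K H (g - h 0) ≤ ∑' k, (μp k univ + μn k univ) := by
  haveI : ∀ k, IsFiniteMeasure (μp k) := fun k => (hrep k).1
  haveI : ∀ k, IsFiniteMeasure (μn k) := fun k => (hrep k).2.1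
  have hMp : (∑' k, μp k univ) ≠ ⊤ :=
    ne_top_of_le_ne_top hM (ENNReal.tsum_le_tsum fun k => le_self_add)
  have hMn : (∑' k, μn k univ) ≠ ⊤ :=
    ne_top_of_le_ne_top hM (ENNReal.tsum_le_tsum fun k => le_add_self)
  have hνp_univ : Measure.sum μp univ = ∑' k, μp k univ :=
    Measure.sum_apply _ MeasurableSet.univ
  have hνn_univ : Measure.sum μn univ = ∑' k, μn k univ :=
    Measure.sum_apply _ MeasurableSet.univ
  haveI : IsFiniteMeasure (Measure.sum μp) := ⟨by rw [hνp_univ]; exact hMp.lt_top⟩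
  haveI : IsFiniteMeasure (Measure.sum μn) := ⟨by rw [hνn_univ]; exact hMn.lt_top⟩
  have hzp : Measure.sum μp Hᶜ = 0 := by
    rw [Measure.sum_apply _ hHm.compl]
    simp [(fun k => (hrep k).2.2.1 : ∀ k, μp k Hᶜ = 0)]
  have hzn : Measure.sum μn Hᶜ = 0 := by
    rw [Measure.sum_apply _ hHm.compl]
    simp [(fun k => (hrep k).2.2.2.1 : ∀ k, μn k Hᶜ = 0)]
  have hint : ∀ (μ : ℕ → Measure C(K, ℝ)), (∀ k, IsFiniteMeasure (μ k)) →
      (∀ k, μ k Hᶜ = 0) → ((∑' k, μ k univ) ≠ ⊤) → ∀ x : K,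
      Integrable (fun g : C(K, ℝ) => relu (g x)) (Measure.sum μ) := by
    intro μ hfin hz hμM x
    refine ⟨(continuous_relu_eval x).aestronglyMeasurable, ?_⟩
    rw [HasFiniteIntegral, lintegral_sum_measure]
    calc (∑' k, ∫⁻ g : C(K, ℝ), (‖relu (g x)‖₊ : ℝ≥0∞) ∂μ k)
        ≤ ∑' k, ENNReal.ofReal C₁ * μ k univ :=
          ENNReal.tsum_le_tsum fun k => lintegral_nnnorm_relu_le hC₁pos hH (hz k) x
      _ = ENNReal.ofReal C₁ * ∑' k, μ k univ := ENNReal.tsum_mul_left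
      _ < ⊤ := ENNReal.mul_lt_top ENNReal.ofReal_lt_top hμM.lt_top
  have hintp := hint μp (fun k => (hrep k).1) (fun k => (hrep k).2.2.1) hMp
  have hintn := hint μn (fun k => (hrep k).2.1) (fun k => (hrep k).2.2.2.1) hMn
  have hrepsum : IsBarronRep K H (g - h 0) (Measure.sum μp) (Measure.sum μn) := by
    refine ⟨inferInstance, inferInstance, hzp, hzn, fun x => ?_⟩
    set ap : ℕ → ℝ := fun k => ∫ g' : C(K, ℝ), relu (g' x) ∂μp k with hap
    set an : ℕ → ℝ := fun k => ∫ g' : C(K, ℝ), relu (g' x) ∂μn k with han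
    have hsum : ∀ (μ : ℕ → Measure C(K, ℝ)), (∀ k, IsFiniteMeasure (μ k)) →
        (∀ k, μ k Hᶜ = 0) → ((∑' k, μ k univ) ≠ ⊤) →
        Summable fun k => ∫ g' : C(K, ℝ), relu (g' x) ∂μ k := by
      intro μ hfin hz hμM
      refine Summable.of_nonneg_of_le
        (fun k => integral_nonneg fun g' => relu_nonneg _)
        (fun k => ?_) (((ENNReal.summable_toReal hμM).mul_left C₁))
      exact le_trans (le_abs_self _) (integral_relu_le hH (hz k) x)
    have hsp : Summable ap := hsum μp (fun k => (hrep k).1) (fun k => (hrep k).2.2.1) hMp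
    have hsn : Summable an := hsum μn (fun k => (hrep k).2.1) (fun k => (hrep k).2.2.2.1) hMn
    have hT1 : Tendsto (fun n => ∑ k ∈ Finset.range n, (ap k - an k)) atTop
        (𝓝 ((∑' k, ap k) - ∑' k, an k)) := by
      simpa [Finset.sum_sub_distrib] using
        (hsp.hasSum.tendsto_sum_nat.sub hsn.hasSum.tendsto_sum_nat)
    have hT2 : ∀ n, ∑ k ∈ Finset.range n, (ap k - an k) = h n x - h 0 x := by
      intro n
      rw [← Finset.sum_range_sub (fun k => h k x)]
      refine Finset.sum_congr rfl fun k _ => ?_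
      have := (hrep k).2.2.2.2 x
      rw [ContinuousMap.sub_apply] at this
      linarith [this]
    have hT3 : Tendsto (fun n => h n x - h 0 x) atTop (𝓝 (g x - h 0 x)) :=
      (hlim x).sub tendsto_const_nhds
    have heq : g x - h 0 x = (∑' k, ap k) - ∑' k, an k := by
      refine tendsto_nhds_unique ?_ hT1
      simpa [hT2] using hT3
    rw [ContinuousMap.sub_apply, heq, integral_sum_measure (hintp x),
      integral_sum_measure (hintn x)]
  refine (barronNorm_le_of_rep hrepsum).trans (le_of_eq ?_)
  rw [hνp_univ, hνn_univ, ← ENNReal.tsum_add]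

end Aux4

/-- The generalized Barron space `B_{X,K}` with its norm `‖·‖_{X,K}` is a
Banach space.  Here `X` is a Banach space embedded in `C^{0,1}(K)` via an injective linear
map `ι` (with `‖ι g‖_{C⁰} ≤ C₁‖g‖_X`, `[ι g]_{Lip} ≤ C₂‖g‖_X`) whose unit ball
`H = ι''(B^X)` is closed in `C⁰(K)`.  The conclusion packages the Banach space structure:
the norm satisfies the triangle inequality, absolute homogeneity, and definiteness, and
the space is complete: every Cauchy sequence for `‖·‖_{X,K}` converges in `‖·‖_{X,K}` to
an element of `B_{X,K}`. -/
theorem generalizedBarron_isBanach {d : ℕ} (K : Set (Fin d → ℝ)) (hK : IsCompact K)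
    {X : Type} [NormedAddCommGroup X] [NormedSpace ℝ X] [CompleteSpace X]
    (ι : X →ₗ[ℝ] C(K, ℝ)) (hinj : Function.Injective ι)
    (C₁ C₂ : ℝ) (hC₁pos : 0 < C₁) (hC₂pos : 0 < C₂)
    (hC₁ : ∀ (g : X) (x : K), |ι g x| ≤ C₁ * ‖g‖)
    (hC₂ : ∀ (g : X) (x y : K), |ι g x - ι g y| ≤ C₂ * ‖g‖ * dist x y)
    (hball : IsClosed (ι '' Metric.closedBall (0 : X) 1)) :
    (∀ f g : C(K, ℝ),
        barronNorm K (ι '' Metric.closedBall (0 : X) 1) (f + g)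
          ≤ barronNorm K (ι '' Metric.closedBall (0 : X) 1) f
            + barronNorm K (ι '' Metric.closedBall (0 : X) 1) g) ∧
    (∀ (c : ℝ) (f : C(K, ℝ)),
        barronNorm K (ι '' Metric.closedBall (0 : X) 1) (c • f)
          = (‖c‖₊ : ℝ≥0∞) * barronNorm K (ι '' Metric.closedBall (0 : X) 1) f) ∧
    (∀ f : C(K, ℝ), barronNorm K (ι '' Metric.closedBall (0 : X) 1) f = 0 → f = 0) ∧
    (∀ f : ℕ → C(K, ℝ),
      (∀ n, barronNorm K (ι '' Metric.closedBall (0 : X) 1) (f n) ≠ ⊤) →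
      (∀ ε : ℝ≥0∞, 0 < ε → ∃ N : ℕ, ∀ p q : ℕ, N ≤ p → N ≤ q →
          barronNorm K (ι '' Metric.closedBall (0 : X) 1) (f p - f q) < ε) →
      ∃ g : C(K, ℝ), barronNorm K (ι '' Metric.closedBall (0 : X) 1) g ≠ ⊤ ∧
        Tendsto (fun n => barronNorm K (ι '' Metric.closedBall (0 : X) 1) (f n - g))
          atTop (𝓝 0)) := by
  set H : Set C(K, ℝ) := ι '' Metric.closedBall (0 : X) 1 with hHdef
  have hH : ∀ g ∈ H, ∀ x : K, |g x| ≤ C₁ := by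
    rintro g ⟨u, hu, rfl⟩ x
    have hu1 : ‖u‖ ≤ 1 := by simpa [Metric.mem_closedBall] using hu
    calc |ι u x| ≤ C₁ * ‖u‖ := hC₁ u x
      _ ≤ C₁ * 1 := by nlinarith
      _ = C₁ := mul_one C₁
  have hHm : MeasurableSet H := hball.measurableSet
  refine ⟨barronNorm_add_le hH, barronNorm_smul, fun f hf => barronNorm_eq_zero hC₁pos hH hf, ?_⟩
  -- completeness
  intro f hfin hcau
  haveI : CompactSpace K := isCompact_iff_compactSpace.mp hK
  -- Cauchy in sup norm
  have hCauchy : CauchySeq f := by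
    rw [Metric.cauchySeq_iff]
    intro ε hε
    obtain ⟨N, hN⟩ := hcau (ENNReal.ofReal (ε / (2 * C₁)))
      (by rw [ENNReal.ofReal_pos]; positivity)
    refine ⟨N, fun p hp q hq => ?_⟩
    have hnorm : ‖f p - f q‖ ≤ ε / 2 := by
      rw [ContinuousMap.norm_le _ (by positivity)]
      intro x
      have h1 := ofReal_pointwise_le hC₁pos hH (f p - f q) x
      have h2 : ENNReal.ofReal C₁ * barronNorm K H (f p - f q)
          ≤ ENNReal.ofReal C₁ * ENNReal.ofReal (ε / (2 * C₁)) :=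
        mul_le_mul_right (le_of_lt (hN p q hp hq)) _
      rw [← ENNReal.ofReal_mul hC₁pos.le] at h2
      have h3 : C₁ * (ε / (2 * C₁)) = ε / 2 := by field_simp
      rw [h3] at h2
      have := h1.trans h2
      rw [ENNReal.ofReal_le_ofReal_iff (by positivity)] at this
      simpa [Real.norm_eq_abs] using this
    calc dist (f p) (f q) = ‖f p - f q‖ := dist_eq_norm _ _
      _ ≤ ε / 2 := hnorm
      _ < ε := by linarith
  obtain ⟨g, hg⟩ := cauchySeq_tendsto_of_complete hCauchy
  -- extraction of a fast subsequence
  have hpow_pos : ∀ k : ℕ, (0 : ℝ≥0∞) < 2⁻¹ ^ k := fun k =>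
    ENNReal.pow_pos (ENNReal.inv_pos.mpr (by norm_num)) k
  choose Nf hNf using fun k : ℕ => hcau ((2⁻¹ : ℝ≥0∞) ^ k) (hpow_pos k)
  set φ : ℕ → ℕ := fun k => (Finset.range (k + 1)).sup Nf + k with hφdef
  have hφk : ∀ k, k ≤ φ k := fun k => Nat.le_add_left k _
  have hφN : ∀ m k, m ≤ k → Nf m ≤ φ k := by
    intro m k hmk
    exact le_trans (Finset.le_sup (Finset.mem_range.mpr (by omega))) (Nat.le_add_right _ _)
  have hstep : ∀ m, barronNorm K H (f (φ (m + 1)) - f (φ m)) < 2⁻¹ ^ m := fun m =>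
    hNf m _ _ (hφN m (m + 1) (by omega)) (hφN m m le_rfl)
  choose μp μn hrepm hmassm using fun m => exists_rep_of_lt (hstep m)
  have htsum2 : (∑' k : ℕ, (2⁻¹ : ℝ≥0∞) ^ k) = 2 := by
    rw [ENNReal.tsum_geometric, ENNReal.one_sub_inv_two, inv_inv]
  -- tail bound
  have htail : ∀ j, barronNorm K H (g - f (φ j)) ≤ 2⁻¹ ^ j * 2 := by
    intro j
    have hsumle : (∑' k : ℕ, (μp (j + k) univ + μn (j + k) univ)) ≤ 2⁻¹ ^ j * 2 := by
      calc (∑' k : ℕ, (μp (j + k) univ + μn (j + k) univ))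
          ≤ ∑' k : ℕ, (2⁻¹ : ℝ≥0∞) ^ (j + k) :=
            ENNReal.tsum_le_tsum fun k => le_of_lt (hmassm (j + k))
        _ = ∑' k : ℕ, (2⁻¹ : ℝ≥0∞) ^ j * 2⁻¹ ^ k := by
            refine tsum_congr fun k => ?_; rw [pow_add]
        _ = (2⁻¹ : ℝ≥0∞) ^ j * ∑' k : ℕ, (2⁻¹ : ℝ≥0∞) ^ k := ENNReal.tsum_mul_left
        _ = 2⁻¹ ^ j * 2 := by rw [htsum2]
    have h2top : ((2⁻¹ : ℝ≥0∞) ^ j * 2) ≠ ⊤ :=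
      ENNReal.mul_ne_top (ENNReal.pow_ne_top (ENNReal.inv_ne_top.mpr two_ne_zero))
        ENNReal.ofNat_ne_top
    have hfinM : (∑' k : ℕ, (μp (j + k) univ + μn (j + k) univ)) ≠ ⊤ :=
      ne_top_of_le_ne_top h2top hsumle
    have hlim : ∀ x : K, Tendsto (fun k => f (φ (j + k)) x) atTop (𝓝 (g x)) := by
      intro x
      have hφt : Tendsto (fun k => φ (j + k)) atTop atTop :=
        tendsto_atTop_mono (fun k => le_trans (Nat.le_add_left k j) (hφk (j + k)))
          tendsto_id
      exact ((continuous_eval_const x).tendsto g).comp (hg.comp hφt)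
    have := rep_sum_le hC₁pos hH hHm (fun k => f (φ (j + k))) g hlim
      (fun k => μp (j + k)) (fun k => μn (j + k)) (fun k => hrepm (j + k)) hfinM
    simpa using this.trans hsumle
  have hφ0fin : barronNorm K H (f (φ 0)) ≠ ⊤ := hfin _
  refine ⟨g, ?_, ?_⟩
  · -- finiteness of barronNorm g
    have hdecomp : g = f (φ 0) + (g - f (φ 0)) := by abel
    have h1 : barronNorm K H g ≤ barronNorm K H (f (φ 0)) + barronNorm K H (g - f (φ 0)) := by
      conv_lhs => rw [hdecomp]
      exact barronNorm_add_le hH _ _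
    have h2 : barronNorm K H (g - f (φ 0)) ≤ 2⁻¹ ^ 0 * 2 := htail 0
    intro htop
    rw [htop] at h1
    have := h1.trans_lt (ENNReal.add_lt_top.mpr ⟨hφ0fin.lt_top,
      h2.trans_lt (by norm_num)⟩)
    exact lt_irrefl _ this
  · -- convergence
    rw [ENNReal.tendsto_nhds_zero]
    intro ε hε
    obtain ⟨N, hN⟩ := hcau (ε / 2) (ENNReal.half_pos hε.ne')
    have hto0 : Tendsto (fun j : ℕ => (2⁻¹ : ℝ≥0∞) ^ j * 2) atTop (𝓝 0) := by
      have := ENNReal.Tendsto.mul_const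
        (ENNReal.tendsto_pow_atTop_nhds_zero_of_lt_one
          (by norm_num : (2⁻¹ : ℝ≥0∞) < 1)) (Or.inr (by norm_num : (2:ℝ≥0∞) ≠ ⊤))
      simpa using this
    obtain ⟨j₀, hj₀⟩ := eventually_atTop.mp
      (hto0.eventually_lt_const (ENNReal.half_pos hε.ne'))
    set j := max N j₀ with hjdef
    have hφjN : N ≤ φ j := le_trans (le_max_left N j₀) (hφk j)
    refine eventually_atTop.mpr ⟨N, fun n hn => ?_⟩
    have hdecomp : f n - g = (f n - f (φ j)) + (f (φ j) - g) := by abel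
    have h1 : barronNorm K H (f n - g)
        ≤ barronNorm K H (f n - f (φ j)) + barronNorm K H (f (φ j) - g) := by
      conv_lhs => rw [hdecomp]
      exact barronNorm_add_le hH _ _
    have h2 : barronNorm K H (f n - f (φ j)) < ε / 2 := hN n (φ j) hn hφjN
    have h3 : barronNorm K H (f (φ j) - g) ≤ ε / 2 := by
      have hneg : f (φ j) - g = -(g - f (φ j)) := by abel
      rw [hneg, barronNorm_neg]
      exact (htail j).trans (le_of_lt (hj₀ j (le_max_right _ _)))
    calc barronNorm K H (f n - g) ≤ _ + _ := h1
      _ ≤ ε / 2 + ε / 2 := add_le_add h2.le h3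
      _ = ε := ENNReal.add_halves ε
end

section
/- Let H be a Hilbert space and G ⊆ H a set with ‖g‖_H ≤ R for all g ∈ G. If f lies in the closed convex hull of G, then for every m ∈ ℕ and every ε > 0 there exist m elements g_1, …, g_m ∈ G (not necessarily distinct) such that ‖ f − (1/m) Σ_{i=1}^m g_i ‖_H ≤ (R + ε)/√m. -/
open Finset RealInnerProductSpace

private lemma exists_le_of_wavg_le {ι : Type} (t : Finset ι) (w c : ι → ℝ) (C : ℝ)
    (hw0 : ∀ i ∈ t, 0 ≤ w i) (hw1 : ∑ i ∈ t, w i = 1)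
    (h : ∑ i ∈ t, w i * c i ≤ C) : ∃ j ∈ t, c j ≤ C := by
  by_contra hc
  push_neg at hc
  obtain ⟨i0, hi0t, hi0⟩ : ∃ i0 ∈ t, 0 < w i0 := by
    by_contra h0
    push_neg at h0
    have : ∑ i ∈ t, w i = 0 := Finset.sum_eq_zero fun i hi => le_antisymm (h0 i hi) (hw0 i hi)
    simp [this] at hw1
  have h1 : ∑ i ∈ t, w i * C < ∑ i ∈ t, w i * c i := by
    refine Finset.sum_lt_sum (fun i hi => ?_) ⟨i0, hi0t, ?_⟩
    · rcases (hw0 i hi).lt_or_eq with h' | h'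
      · exact le_of_lt (by exact (mul_lt_mul_iff_right₀ h').mpr (hc i hi))
      · simp [← h']
    · exact (mul_lt_mul_iff_right₀ hi0).mpr (hc i0 hi0t)
  rw [← Finset.sum_mul, hw1, one_mul] at h1
  exact absurd (h1.trans_le h) (lt_irrefl C)

/-- **Maurey / Barron's Hilbert space lemma.** Let `G` be a subset of a
Hilbert space `H` with `‖g‖ ≤ R` for all `g ∈ G`.  If `f` lies in the closed convex hull
of `G`, then for every `m ≥ 1` and `ε > 0` there are `g_1, …, g_m ∈ G` (not necessarily
distinct) with `‖f − (1/m) Σ_i g_i‖ ≤ (R + ε)/√m`. -/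
theorem maurey_sampling {H : Type*} [NormedAddCommGroup H] [InnerProductSpace ℝ H]
    [CompleteSpace H] (G : Set H) (R : ℝ) (hG : ∀ g ∈ G, ‖g‖ ≤ R)
    (f : H) (hf : f ∈ closure (convexHull ℝ G))
    (m : ℕ) (hm : 0 < m) (ε : ℝ) (hε : 0 < ε) :
    ∃ g : Fin m → H, (∀ i, g i ∈ G) ∧
      ‖f - (m : ℝ)⁻¹ • ∑ i, g i‖ ≤ (R + ε) / Real.sqrt m := by
  have hm' : (0:ℝ) < m := Nat.cast_pos.mpr hm
  have hsm : (0:ℝ) < Real.sqrt m := Real.sqrt_pos.mpr hm'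
  obtain ⟨f', hf'G, hf'near⟩ : ∃ f' ∈ convexHull ℝ G, ‖f - f'‖ < ε / Real.sqrt m := by
    rcases Metric.mem_closure_iff.mp hf _ (div_pos hε hsm) with ⟨f', h1, h2⟩
    exact ⟨f', h1, by rwa [dist_eq_norm] at h2⟩
  rw [_root_.convexHull_eq] at hf'G
  obtain ⟨ι, t, w, z, hw0, hw1, hzG, hcm⟩ := hf'G
  have hf'' : ∑ i ∈ t, w i • z i = f' := by
    rw [← Finset.centerMass_eq_of_sum_1 _ _ hw1]; exact hcm
  have htne : t.Nonempty := by
    rcases Finset.eq_empty_or_nonempty t with h | h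
    · simp [h] at hw1
    · exact h
  obtain ⟨j0, hj0⟩ := htne
  have hR : 0 ≤ R := le_trans (norm_nonneg (z j0)) (hG _ (hzG j0 hj0))
  -- variance bound
  have hvar : ∑ i ∈ t, w i * ‖z i - f'‖ ^ 2 ≤ R ^ 2 := by
    have expand : ∀ i ∈ t, w i * ‖z i - f'‖ ^ 2
        = w i * ‖z i‖ ^ 2 - 2 * ⟪(w i • z i : H), f'⟫ + w i * ‖f'‖ ^ 2 := by
      intro i hi
      have : ‖z i - f'‖ ^ 2 = ‖z i‖ ^ 2 - 2 * ⟪z i, f'⟫ + ‖f'‖ ^ 2 := by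
        rw [sub_eq_add_neg, norm_add_sq_real]
        simp [inner_neg_right]
        ring
      rw [this, real_inner_smul_left]
      ring
    have h2 : ∑ i ∈ t, w i * ‖z i - f'‖ ^ 2 = (∑ i ∈ t, w i * ‖z i‖ ^ 2) - ‖f'‖ ^ 2 := by
      rw [Finset.sum_congr rfl expand, Finset.sum_add_distrib, Finset.sum_sub_distrib]
      have h3 : ∑ i ∈ t, 2 * ⟪(w i • z i : H), f'⟫ = 2 * ‖f'‖ ^ 2 := by
        rw [← Finset.mul_sum, ← sum_inner, hf'', real_inner_self_eq_norm_sq]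
      rw [h3, ← Finset.sum_mul, hw1]; ring
    have h4 : ∑ i ∈ t, w i * ‖z i‖ ^ 2 ≤ R ^ 2 := by
      calc ∑ i ∈ t, w i * ‖z i‖ ^ 2 ≤ ∑ i ∈ t, w i * R ^ 2 := by
            refine Finset.sum_le_sum fun i hi => ?_
            exact mul_le_mul_of_nonneg_left
              (pow_le_pow_left₀ (norm_nonneg _) (hG _ (hzG i hi)) 2) (hw0 i hi)
        _ = R ^ 2 := by rw [← Finset.sum_mul, hw1, one_mul]
    have h5 : (0:ℝ) ≤ ‖f'‖ ^ 2 := sq_nonneg _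
    linarith
  -- averaging inequality
  have havg : ∀ y : H, ∑ i ∈ t, w i * ‖y + (z i - f')‖ ^ 2 ≤ ‖y‖ ^ 2 + R ^ 2 := by
    intro y
    have hexp : ∀ i ∈ t, w i * ‖y + (z i - f')‖ ^ 2
        = w i * ‖y‖ ^ 2 + 2 * ⟪y, w i • (z i - f')⟫ + w i * ‖z i - f'‖ ^ 2 := by
      intro i hi
      rw [norm_add_sq_real, real_inner_smul_right]
      ring
    have hz0 : ∑ i ∈ t, w i • (z i - f') = 0 := by
      simp only [smul_sub, Finset.sum_sub_distrib, hf'', ← Finset.sum_smul, hw1, one_smul,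
        sub_self]
    rw [Finset.sum_congr rfl hexp, Finset.sum_add_distrib, Finset.sum_add_distrib,
      ← Finset.sum_mul, hw1, one_mul, ← Finset.mul_sum, ← inner_sum, hz0, inner_zero_right]
    linarith [hvar]
  -- main induction: unnormalized sums
  have key : ∀ k : ℕ, ∃ g : Fin k → H, (∀ i, g i ∈ G) ∧
      ‖(∑ i, g i) - (k : ℝ) • f'‖ ^ 2 ≤ k * R ^ 2 := by
    intro k
    induction k with
    | zero => exact ⟨fun i => 0, fun i => i.elim0, by simp⟩
    | succ k ih =>
      obtain ⟨g, hgG, hg⟩ := ih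
      set y : H := (∑ i, g i) - (k : ℝ) • f' with hy
      obtain ⟨j, hjt, hj⟩ : ∃ j ∈ t, ‖y + (z j - f')‖ ^ 2 ≤ ‖y‖ ^ 2 + R ^ 2 :=
        exists_le_of_wavg_le t w _ _ hw0 hw1 (havg y)
      refine ⟨Fin.snoc g (z j), ?_, ?_⟩
      · intro i
        refine Fin.lastCases ?_ ?_ i
        · simpa using hzG j hjt
        · intro i; simpa using hgG i
      · have hsum : (∑ i : Fin (k + 1), Fin.snoc g (z j) i) = (∑ i, g i) + z j := by
          rw [Fin.sum_univ_castSucc]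
          simp
        have hre : (∑ i, g i) + z j - ((k : ℕ) + 1 : ℝ) • f' = y + (z j - f') := by
          rw [hy, add_smul, one_smul]
          abel
        rw [hsum]
        push_cast
        rw [hre]
        have : (k : ℝ) * R ^ 2 + R ^ 2 = ((k : ℝ) + 1) * R ^ 2 := by ring
        linarith [hj, hg]
  obtain ⟨g, hgG, hg⟩ := key m
  refine ⟨g, hgG, ?_⟩
  have hnorm : ‖(∑ i, g i) - (m : ℝ) • f'‖ ≤ Real.sqrt m * R := by
    have h6 : (0:ℝ) ≤ Real.sqrt m * R := mul_nonneg (Real.sqrt_nonneg _) hR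
    have h7 : ‖(∑ i, g i) - (m : ℝ) • f'‖ ^ 2 ≤ (Real.sqrt m * R) ^ 2 := by
      rw [mul_pow, Real.sq_sqrt hm'.le]
      exact hg
    exact (pow_le_pow_iff_left₀ (norm_nonneg _) h6 two_ne_zero).mp h7
  have hfin : ‖f' - (m : ℝ)⁻¹ • ∑ i, g i‖ ≤ R / Real.sqrt m := by
    have : f' - (m : ℝ)⁻¹ • ∑ i, g i = -((m : ℝ)⁻¹ • ((∑ i, g i) - (m : ℝ) • f')) := by
      rw [smul_sub, smul_smul, inv_mul_cancel₀ hm'.ne', one_smul]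
      abel
    rw [this, norm_neg, norm_smul, Real.norm_eq_abs, abs_of_pos (inv_pos.mpr hm')]
    calc (m : ℝ)⁻¹ * ‖(∑ i, g i) - (m : ℝ) • f'‖ ≤ (m : ℝ)⁻¹ * (Real.sqrt m * R) :=
          mul_le_mul_of_nonneg_left hnorm (inv_nonneg.mpr hm'.le)
      _ = R / Real.sqrt m := by
          rw [eq_div_iff hsm.ne']
          calc (m : ℝ)⁻¹ * (Real.sqrt m * R) * Real.sqrt m
              = (Real.sqrt m * Real.sqrt m) * R * (m : ℝ)⁻¹ := by ring
            _ = (m : ℝ) * R * (m : ℝ)⁻¹ := by rw [Real.mul_self_sqrt hm'.le]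
            _ = R := by field_simp
  calc ‖f - (m : ℝ)⁻¹ • ∑ i, g i‖
      ≤ ‖f - f'‖ + ‖f' - (m : ℝ)⁻¹ • ∑ i, g i‖ := by
        have : f - (m : ℝ)⁻¹ • ∑ i, g i = (f - f') + (f' - (m : ℝ)⁻¹ • ∑ i, g i) := by abel
        rw [this]; exact norm_add_le _ _
    _ ≤ ε / Real.sqrt m + R / Real.sqrt m := add_le_add hf'near.le hfin
    _ = (R + ε) / Real.sqrt m := by ring
end

section
/- Let ℙ be a probability measure on ℝ^d with support contained in the ball B_R(0), let L ≥ 1, f ∈ W^L(spt ℙ), and m ∈ ℕ. Then there exists a finite ReLU network f_m with L hidden layers of widths m, m², …, m^L (outermost to innermost), f_m(x) = Σ_{i_L=1}^{m} a^L_{i_L} σ( Σ_{i_{L−1}=1}^{m²} a^{L−1}_{i_L i_{L−1}} σ( ⋯ σ( Σ_{i_1=1}^{m^L} a¹_{i_2 i_1} σ( Σ_{i_0=1}^{d+1} a⁰_{i_1 i_0} x_{i_0} ) ) ⋯ ) ) ), such that (1) ‖f_m − f‖_{L²(ℙ)} ≤ L(2+R)‖f‖_{W^L}/√m and (2) the path-norm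 proxy satisfies Σ_{i_L=1}^{m} ⋯ Σ_{i_1=1}^{m^L} Σ_{i_0=1}^{d+1} |a^L_{i_L} a^{L−1}_{i_L i_{L−1}} ⋯ a⁰_{i_1 i_0}| ≤ ‖f‖_{W^L}. -/
open MeasureTheory Set Filter Topology
open scoped ENNReal NNReal Classical

noncomputable section

/-- The neural tree norm `‖·‖_{W^L(K)}`. For `L = 0` it is the norm `‖w‖_{ℓ¹} + |b|` of the
space of affine functions `x ↦ wᵀx + b`; for `L ≥ 1`, `W^L(K) = B_{W^{L-1}(K), K}` is the
generalized Barron space modelled on `X = W^{L-1}(K)`, whose unit ball is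
`{g : treeNorm K (L-1) g ≤ 1}`.  A continuous function `f` belongs to `W^L(K)` iff
`treeNorm K L f ≠ ∞`. -/
def treeNorm {d : ℕ} (K : Set (Fin d → ℝ)) : ℕ → C(K, ℝ) → ℝ≥0∞
  | 0, f =>
    ⨅ p : {p : (Fin d → ℝ) × ℝ //
        ∀ x : K, f x = (∑ i : Fin d, p.1 i * (x : Fin d → ℝ) i) + p.2},
      ENNReal.ofReal ((∑ i : Fin d, |p.1.1 i|) + |p.1.2|)
  | (L + 1), f => barronNorm K {g : C(K, ℝ) | treeNorm K L g ≤ 1} f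

/-- Hidden unit values of a fully connected ReLU network: `hiddenLayer d m a x ℓ j` is the
output of the `j`-th unit in the `(ℓ+1)`-th hidden layer (of width `m (ℓ+1)`), on input `x`
(with the convention `x_{d+1} = 1` handled by the bias weight `a 0 j d`). -/
def hiddenLayer (d : ℕ) (m : ℕ → ℕ) (a : ℕ → ℕ → ℕ → ℝ) (x : Fin d → ℝ) : ℕ → ℕ → ℝ
  | 0, j => relu ((∑ i : Fin d, a 0 j i.val * x i) + a 0 j d)
  | (ℓ + 1), j => relu (∑ i ∈ Finset.range (m (ℓ + 1)), a (ℓ + 1) j i * hiddenLayer d m a x ℓ i)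

/-- Realization of a finite fully connected ReLU network with `L ≥ 1` hidden layers,
hidden-layer widths `m 1, …, m L`, outer coefficients `c` and weights `a`. -/
def netRealize (d L : ℕ) (m : ℕ → ℕ) (c : ℕ → ℝ) (a : ℕ → ℕ → ℕ → ℝ) (x : Fin d → ℝ) : ℝ :=
  ∑ i ∈ Finset.range (m L), c i * hiddenLayer d m a x (L - 1) i

/-- Sum over all paths below a given hidden unit of the products of absolute weights. -/
def pathBelow (d : ℕ) (m : ℕ → ℕ) (a : ℕ → ℕ → ℕ → ℝ) : ℕ → ℕ → ℝ
  | 0, j => ∑ i ∈ Finset.range (d + 1), |a 0 j i|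
  | (ℓ + 1), j => ∑ i ∈ Finset.range (m (ℓ + 1)), |a (ℓ + 1) j i| * pathBelow d m a ℓ i

/-- The path-norm proxy `Σ_{i_L,…,i_0} |a^L_{i_L} a^{L-1}_{i_L i_{L-1}} ⋯ a⁰_{i_1 i_0}|`
of a finite ReLU network with `L ≥ 1` hidden layers. -/
def pathProxy (d L : ℕ) (m : ℕ → ℕ) (c : ℕ → ℝ) (a : ℕ → ℕ → ℕ → ℝ) : ℝ :=
  ∑ i ∈ Finset.range (m L), |c i| * pathBelow d m a (L - 1) i

/-- The support of a measure: all points whose every open neighbourhood has positive mass. -/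
def msupport {d : ℕ} (P : Measure (Fin d → ℝ)) : Set (Fin d → ℝ) :=
  {x | ∀ U : Set (Fin d → ℝ), IsOpen U → x ∈ U → 0 < P U}

end

/-!
Write `f ∈ W^L(K)` as `∫ σ(g) dμ⁺ - ∫ σ(g) dμ⁻` with `μ±` concentrated on the unit ball of
`W^{L-1}(K)`, whose elements are bounded by `R + 1` on `K`. Approximating the identity of `C(K)`
by simple functions in `L¹(μ⁺ + μ⁻)` replaces `f`, uniformly on `K`, by a finite combination
`∑ c_v σ(v)` with `‖c‖₁ ≤ ‖μ⁺‖ + ‖μ⁻‖`. Maurey's empirical method then keeps only `m` atoms, with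
weights `± ‖c‖₁ / m`, at an `L²(ℙ)` cost of `‖c‖₁ (R + 1) / √m`. Recursing into the `m` chosen
atoms builds a tree-shaped network of branching `m` and depth `L` whose errors add up to
`L (R + 1) ‖f‖ / √m` plus an arbitrarily small slack; shrinking the outer weights by a factor
`1 / (1 + η)` brings the path norm down to `‖f‖` at a cost `η (R + 1) ‖f‖`, which together with
the slack is absorbed by the extra `L ‖f‖ / √m`. A tree with branching `m` is a fully connected
network of widths `m, …, m^L` with block-diagonal weights.
-/

noncomputable section

namespace DirectApproximation

lemma continuous_relu : Continuous relu := continuous_id.max continuous_const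

@[simp] lemma relu_zero : relu 0 = 0 := max_self 0

lemma abs_relu_sub_relu_le (a b : ℝ) : |relu a - relu b| ≤ |a - b| :=
  abs_max_sub_max_le_abs a b 0

lemma abs_relu_le (a : ℝ) : |relu a| ≤ |a| := by
  simpa using abs_relu_sub_relu_le a 0

lemma abs_sign_le_one (x : ℝ) : |(SignType.sign x : ℝ)| ≤ 1 := by
  rcases lt_trichotomy x 0 with h | h | h <;> simp [h]

def reluMap : C(ℝ, ℝ) := ⟨relu, continuous_relu⟩

@[simp] lemma reluMap_apply (z : ℝ) : reluMap z = relu z := rfl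

/-- A ReLU network whose computation graph is a tree. With branching `m`, only the children and
coefficients of index `< m` of a node take part in `eval` and `pathNorm`; leaves are the affine
pre-activations `x ↦ wᵀx + b`. -/
inductive ReluTree (d : ℕ) : Type
  | leaf : (Fin d → ℝ) → ℝ → ReluTree d
  | node : (ℕ → ℝ) → (ℕ → ReluTree d) → ReluTree d

namespace ReluTree

variable {d : ℕ} (m : ℕ)

def eval : ReluTree d → (Fin d → ℝ) → ℝ
  | leaf w b, x => ∑ i, w i * x i + b
  | node c t, x => ∑ i ∈ Finset.range m, c i * relu (eval (t i) x)

def pathNorm : ReluTree d → ℝ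
  | leaf w b => ∑ i, |w i| + |b|
  | node c t => ∑ i ∈ Finset.range m, |c i| * pathNorm (t i)

inductive HasDepth : ℕ → ReluTree d → Prop
  | leaf (w : Fin d → ℝ) (b : ℝ) : HasDepth 0 (leaf w b)
  | node {ℓ : ℕ} (c : ℕ → ℝ) (t : ℕ → ReluTree d) : (∀ i, HasDepth ℓ (t i)) →
      HasDepth (ℓ + 1) (node c t)

def child : ReluTree d → ℕ → ReluTree d
  | leaf w b, _ => leaf w b
  | node _ t, i => t i

def coeff : ReluTree d → ℕ → ℝ
  | leaf _ _, _ => 0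
  | node c _, i => c i

def weight : ReluTree d → Fin d → ℝ
  | leaf w _ => w
  | node _ _ => 0

def bias : ReluTree d → ℝ
  | leaf _ b => b
  | node _ _ => 0

/-- The node at depth `k` whose position, written in base `m`, is `j`. -/
def subtree : ℕ → ReluTree d → ℕ → ReluTree d
  | 0, t, _ => t
  | k + 1, t, j => child (subtree k t (j / m)) (j % m)

/-- The weights of the fully connected network with hidden widths `m ^ L, …, m` that computes
the same function as a tree of depth `L`: the `j`-th unit of a layer is connected only to the
block `j * m, …, j * m + m - 1` of the layer below. -/
def flatWeights (L : ℕ) (t : ReluTree d) : ℕ → ℕ → ℕ → ℝ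
  | 0, j, i => if h : i < d then weight (subtree m L t j) ⟨i, h⟩ else bias (subtree m L t j)
  | ℓ + 1, j, i =>
      if j * m ≤ i ∧ i < j * m + m then coeff (subtree m (L - (ℓ + 1)) t j) (i - j * m) else 0

variable {m}

namespace HasDepth

variable {t : ReluTree d}

lemma eval_eq_affine (h : HasDepth 0 t) (x : Fin d → ℝ) :
    t.eval m x = ∑ i, t.weight i * x i + t.bias := by
  cases h; rfl

lemma pathNorm_eq_abs (h : HasDepth 0 t) : t.pathNorm m = ∑ i, |t.weight i| + |t.bias| := by
  cases h; rfl

lemma eval_eq_sum {ℓ : ℕ} (h : HasDepth (ℓ + 1) t) (x : Fin d → ℝ) :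
    t.eval m x = ∑ r ∈ Finset.range m, t.coeff r * relu ((t.child r).eval m x) := by
  cases h; rfl

lemma pathNorm_eq_sum {ℓ : ℕ} (h : HasDepth (ℓ + 1) t) :
    t.pathNorm m = ∑ r ∈ Finset.range m, |t.coeff r| * (t.child r).pathNorm m := by
  cases h; rfl

lemma child {ℓ : ℕ} (h : HasDepth (ℓ + 1) t) (r : ℕ) : HasDepth ℓ (t.child r) := by
  cases h with
  | node c t ht => exact ht r

lemma subtree {ℓ k : ℕ} (h : HasDepth (ℓ + k) t) (j : ℕ) : HasDepth ℓ (subtree m k t j) := by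
  induction k generalizing ℓ j with
  | zero => exact h
  | succ k ih => exact (ih (ℓ := ℓ + 1) (by rwa [add_right_comm, add_assoc]) (j / m)).child _

end HasDepth

lemma subtree_succ_mul_add (k : ℕ) (t : ReluTree d) (j : ℕ) {r : ℕ} (hr : r < m) :
    subtree m (k + 1) t (j * m + r) = child (subtree m k t j) r := by
  have hdiv : (j * m + r) / m = j := by
    rw [mul_comm, Nat.mul_add_div (by omega), Nat.div_eq_of_lt hr, add_zero]
  rw [subtree, hdiv, Nat.mul_add_mod_of_lt hr]

lemma mul_add_lt_pow_sub {L ℓ j r : ℕ} (hℓ : ℓ < L) (hj : j < m ^ (L - (ℓ + 1))) (hr : r < m) :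
    j * m + r < m ^ (L - ℓ) := by
  rw [show L - ℓ = L - (ℓ + 1) + 1 by omega, pow_succ]
  nlinarith

lemma sum_flatWeights_succ {L : ℕ} (t : ReluTree d) {G : ℝ → ℝ → ℝ} (hG : ∀ y, G 0 y = 0)
    (f : ℕ → ℝ) {ℓ j : ℕ} (hℓ : ℓ < L) (hj : j < m ^ (L - (ℓ + 1))) :
    ∑ i ∈ Finset.range (m ^ (L - ℓ)), G (flatWeights m L t (ℓ + 1) j i) (f i)
      = ∑ r ∈ Finset.range m, G ((subtree m (L - (ℓ + 1)) t j).coeff r) (f (j * m + r)) := by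
  rw [← Finset.sum_subset (s₁ := Finset.Ico (j * m) (j * m + m)), Finset.sum_Ico_eq_sum_range]
  · refine Finset.sum_congr (by simp) fun r hr => ?_
    rw [Finset.mem_range] at hr
    rw [flatWeights, if_pos (by omega), Nat.add_sub_cancel_left]
  · intro i hi
    rw [Finset.mem_Ico] at hi
    rw [Finset.mem_range, show i = j * m + (i - j * m) by omega]
    exact mul_add_lt_pow_sub hℓ hj (by omega)
  · intro i _ hi
    rw [Finset.mem_Ico] at hi
    rw [flatWeights, if_neg hi, hG]

variable {L : ℕ} {t : ReluTree d}

lemma hiddenLayer_flatWeights (ht : HasDepth L t) (x : Fin d → ℝ) {ℓ : ℕ} (hℓ : ℓ < L)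
    {j : ℕ} (hj : j < m ^ (L - ℓ)) :
    hiddenLayer d (fun k => m ^ (L + 1 - k)) (flatWeights m L t) x ℓ j
      = relu ((subtree m (L - ℓ) t j).eval m x) := by
  induction ℓ generalizing j with
  | zero =>
    have hleaf : HasDepth 0 (subtree m L t j) := HasDepth.subtree (by rwa [zero_add]) j
    simp only [hiddenLayer, flatWeights, Fin.is_lt, dite_true, lt_irrefl, dite_false,
      Nat.sub_zero, hleaf.eval_eq_affine]
  | succ ℓ ih =>
    have hnode : HasDepth (ℓ + 1) (subtree m (L - (ℓ + 1)) t j) :=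
      HasDepth.subtree (by rwa [Nat.add_sub_cancel' (by omega)]) j
    rw [hiddenLayer, show L + 1 - (ℓ + 1) = L - ℓ by omega,
      sum_flatWeights_succ t (fun y => zero_mul y) _ (by omega) hj, hnode.eval_eq_sum]
    congr 1
    refine Finset.sum_congr rfl fun r hr => ?_
    have hr : r < m := Finset.mem_range.mp hr
    rw [ih (by omega) (mul_add_lt_pow_sub (by omega) hj hr), show L - ℓ = L - (ℓ + 1) + 1 by omega,
      subtree_succ_mul_add _ _ _ hr]

lemma pathBelow_flatWeights (ht : HasDepth L t) {ℓ : ℕ} (hℓ : ℓ < L) {j : ℕ}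
    (hj : j < m ^ (L - ℓ)) :
    pathBelow d (fun k => m ^ (L + 1 - k)) (flatWeights m L t) ℓ j
      = (subtree m (L - ℓ) t j).pathNorm m := by
  induction ℓ generalizing j with
  | zero =>
    have hleaf : HasDepth 0 (subtree m L t j) := HasDepth.subtree (by rwa [zero_add]) j
    rw [pathBelow, Finset.sum_range_succ, ← Fin.sum_univ_eq_sum_range, Nat.sub_zero,
      hleaf.pathNorm_eq_abs]
    simp only [flatWeights, Fin.is_lt, dite_true, lt_irrefl, dite_false]
  | succ ℓ ih =>
    have hnode : HasDepth (ℓ + 1) (subtree m (L - (ℓ + 1)) t j) :=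
      HasDepth.subtree (by rwa [Nat.add_sub_cancel' (by omega)]) j
    rw [pathBelow, show L + 1 - (ℓ + 1) = L - ℓ by omega,
      sum_flatWeights_succ t (G := fun a y => |a| * y) (by simp) _ (by omega) hj,
      hnode.pathNorm_eq_sum]
    refine Finset.sum_congr rfl fun r hr => ?_
    have hr : r < m := Finset.mem_range.mp hr
    rw [ih (by omega) (mul_add_lt_pow_sub (by omega) hj hr),
      show L - ℓ = L - (ℓ + 1) + 1 by omega, subtree_succ_mul_add _ _ _ hr]

lemma subtree_one {r : ℕ} (hr : r < m) : subtree m 1 t r = t.child r := by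
  simpa [subtree] using subtree_succ_mul_add 0 t 0 hr

lemma netRealize_flatWeights (ht : HasDepth L t) (hL : 0 < L) (κ : ℝ) (x : Fin d → ℝ) :
    netRealize d L (fun k => m ^ (L + 1 - k)) (fun i => κ * t.coeff i) (flatWeights m L t) x
      = κ * t.eval m x := by
  obtain ⟨L, rfl⟩ : ∃ L', L = L' + 1 := ⟨L - 1, by omega⟩
  rw [netRealize, ht.eval_eq_sum, Finset.mul_sum, show L + 1 + 1 - (L + 1) = 1 by omega, pow_one]
  refine Finset.sum_congr rfl fun r hr => ?_
  have hr : r < m := Finset.mem_range.mp hr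
  rw [Nat.add_sub_cancel, hiddenLayer_flatWeights ht x (by omega) (by simpa using hr),
    show L + 1 - L = 1 by omega, subtree_one hr, mul_assoc]

lemma pathProxy_flatWeights (ht : HasDepth L t) (hL : 0 < L) (κ : ℝ) :
    pathProxy d L (fun k => m ^ (L + 1 - k)) (fun i => κ * t.coeff i) (flatWeights m L t)
      = |κ| * t.pathNorm m := by
  obtain ⟨L, rfl⟩ : ∃ L', L = L' + 1 := ⟨L - 1, by omega⟩
  rw [pathProxy, ht.pathNorm_eq_sum, Finset.mul_sum, show L + 1 + 1 - (L + 1) = 1 by omega,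
    pow_one]
  refine Finset.sum_congr rfl fun r hr => ?_
  have hr : r < m := Finset.mem_range.mp hr
  rw [Nat.add_sub_cancel, pathBelow_flatWeights ht (by omega) (by simpa using hr),
    show L + 1 - L = 1 by omega, subtree_one hr, abs_mul, mul_assoc]

lemma continuous_eval (t : ReluTree d) : Continuous (t.eval m) := by
  induction t with
  | leaf w b => exact (continuous_finsetSum _ fun i _ =>
      continuous_const.mul (continuous_apply i)).add continuous_const
  | node c t ih => exact continuous_finsetSum _ fun i _ =>
      continuous_const.mul (continuous_relu.comp (ih i))

variable (m) in
def evalOn (K : Set (Fin d → ℝ)) (t : ReluTree d) : C(K, ℝ) :=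
  ⟨fun x => t.eval m x, (continuous_eval t).comp continuous_subtype_val⟩

@[simp] lemma evalOn_apply (K : Set (Fin d → ℝ)) (t : ReluTree d) (x : K) :
    t.evalOn m K x = t.eval m x := rfl

lemma evalOn_node (K : Set (Fin d → ℝ)) (c : ℕ → ℝ) (t : ℕ → ReluTree d) :
    (node c t).evalOn m K = ∑ i ∈ Finset.range m, c i • reluMap.comp ((t i).evalOn m K) := by
  ext x
  simp [eval]

end ReluTree

section TreeNorm

variable {d : ℕ} {K : Set (Fin d → ℝ)}

lemma exists_affine_of_treeNorm_zero_lt {g : C(K, ℝ)} {c : ℝ≥0∞} (h : treeNorm K 0 g < c) :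
    ∃ (w : Fin d → ℝ) (b : ℝ), (∀ x : K, g x = ∑ i, w i * (x : Fin d → ℝ) i + b) ∧
      ENNReal.ofReal (∑ i, |w i| + |b|) < c := by
  rw [treeNorm, iInf_lt_iff] at h
  obtain ⟨⟨⟨w, b⟩, hwb⟩, hlt⟩ := h
  exact ⟨w, b, hwb, hlt⟩

lemma exists_isBarronRep_of_treeNorm_succ_lt {ℓ : ℕ} {g : C(K, ℝ)} {c : ℝ≥0∞}
    (h : treeNorm K (ℓ + 1) g < c) :
    ∃ μp μn : Measure C(K, ℝ), IsBarronRep K {g' | treeNorm K ℓ g' ≤ 1} g μp μn ∧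
      μp univ + μn univ < c := by
  rw [treeNorm, barronNorm, iInf_lt_iff] at h
  obtain ⟨⟨⟨μp, μn⟩, hrep⟩, hlt⟩ := h
  exact ⟨μp, μn, hrep, hlt⟩

lemma treeNorm_zero_fun : ∀ ℓ : ℕ, treeNorm K ℓ (0 : C(K, ℝ)) = 0
  | 0 => le_antisymm (iInf_le_of_le ⟨(0, 0), fun x => by simp⟩ (by simp)) zero_le
  | ℓ + 1 => le_antisymm (iInf_le_of_le ⟨(0, 0), inferInstance, inferInstance, by simp, by simp,
      fun x => by simp⟩ (by simp)) zero_le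

lemma abs_integral_relu_le {μ : Measure C(K, ℝ)} [IsFiniteMeasure μ] {H : Set C(K, ℝ)}
    (hμH : μ Hᶜ = 0) {x : K} {B : ℝ} (hB : ∀ g ∈ H, |g x| ≤ B) :
    |∫ g, relu (g x) ∂μ| ≤ B * μ.real univ := by
  refine norm_integral_le_of_norm_le_const (f := fun g : C(K, ℝ) => relu (g x)) ?_
  filter_upwards [measure_eq_zero_iff_ae_notMem.mp hμH] with g hg
  exact (abs_relu_le _).trans (hB g (by simpa using hg))

variable {R : ℝ} (hR : 0 ≤ R) (hK : ∀ x : K, ‖(x : Fin d → ℝ)‖ ≤ R)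
include hR hK

lemma abs_affine_le (w : Fin d → ℝ) (b : ℝ) (x : K) :
    |∑ i, w i * (x : Fin d → ℝ) i + b| ≤ (R + 1) * (∑ i, |w i| + |b|) := by
  have hw : |∑ i, w i * (x : Fin d → ℝ) i| ≤ (∑ i, |w i|) * R := by
    rw [Finset.sum_mul]
    refine (Finset.abs_sum_le_sum_abs _ _).trans (Finset.sum_le_sum fun i _ => ?_)
    rw [abs_mul]
    exact mul_le_mul_of_nonneg_left ((norm_le_pi_norm _ i).trans (hK x)) (abs_nonneg _)
  have : 0 ≤ ∑ i, |w i| := Finset.sum_nonneg fun i _ => abs_nonneg _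
  nlinarith [abs_add_le (∑ i, w i * (x : Fin d → ℝ) i) b, abs_nonneg b]

theorem ofReal_abs_le_treeNorm :
    ∀ (ℓ : ℕ) (g : C(K, ℝ)) (x : K),
      ENNReal.ofReal |g x| ≤ ENNReal.ofReal (R + 1) * treeNorm K ℓ g
  | 0, g, x => by
    rw [treeNorm, ENNReal.mul_iInf_of_ne (by simp; linarith) ENNReal.ofReal_ne_top]
    refine le_iInf fun ⟨⟨w, b⟩, hwb⟩ => ?_
    rw [← ENNReal.ofReal_mul (by linarith), hwb x]
    exact ENNReal.ofReal_le_ofReal (abs_affine_le hR hK w b x)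
  | ℓ + 1, g, x => by
    rw [treeNorm, barronNorm, ENNReal.mul_iInf_of_ne (by simp; linarith) ENNReal.ofReal_ne_top]
    refine le_iInf fun ⟨⟨μp, μn⟩, hfp, hfn, hp, hn, hg⟩ => ?_
    have hH : ∀ g' ∈ {g' : C(K, ℝ) | treeNorm K ℓ g' ≤ 1}, |g' x| ≤ R + 1 := fun g' hg' => by
      have := (ofReal_abs_le_treeNorm ℓ g' x).trans (mul_le_of_le_one_right' hg')
      exact (ENNReal.ofReal_le_ofReal_iff (by linarith)).mp this
    have hgx : |g x| ≤ (R + 1) * (μp.real univ + μn.real univ) := by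
      rw [hg x, mul_add]
      exact (abs_sub _ _).trans (add_le_add (abs_integral_relu_le hp hH)
        (abs_integral_relu_le hn hH))
    refine (ENNReal.ofReal_le_ofReal hgx).trans_eq ?_
    rw [ENNReal.ofReal_mul (by linarith), ENNReal.ofReal_add measureReal_nonneg
      measureReal_nonneg, measureReal_def, measureReal_def,
      ENNReal.ofReal_toReal (measure_ne_top _ _), ENNReal.ofReal_toReal (measure_ne_top _ _)]

lemma norm_le_treeNorm_toReal [CompactSpace K] {ℓ : ℕ} {g : C(K, ℝ)}
    (hg : treeNorm K ℓ g ≠ ⊤) : ‖g‖ ≤ (R + 1) * (treeNorm K ℓ g).toReal := by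
  refine (ContinuousMap.norm_le _ (by positivity)).mpr fun x => ?_
  have := ofReal_abs_le_treeNorm hR hK ℓ g x
  rw [← ENNReal.ofReal_toReal hg, ← ENNReal.ofReal_mul (by linarith)] at this
  exact (ENNReal.ofReal_le_ofReal_iff (by positivity)).mp this

lemma norm_le_of_treeNorm_le_one [CompactSpace K] {ℓ : ℕ} {g : C(K, ℝ)}
    (hg : treeNorm K ℓ g ≤ 1) : ‖g‖ ≤ R + 1 := by
  have hg' : treeNorm K ℓ g ≠ ⊤ := ne_top_of_le_ne_top ENNReal.one_ne_top hg
  calc ‖g‖ ≤ (R + 1) * (treeNorm K ℓ g).toReal := norm_le_treeNorm_toReal hR hK hg'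
    _ ≤ (R + 1) * 1 := by
      gcongr
      simpa using ENNReal.toReal_mono ENNReal.one_ne_top hg
    _ = R + 1 := mul_one _

end TreeNorm

section L2

variable {α : Type*} [TopologicalSpace α] [MeasurableSpace α] [BorelSpace α] [CompactSpace α]
  {μ : Measure α} [IsFiniteMeasure μ]

abbrev toL2 (μ : Measure α) [IsFiniteMeasure μ] : C(α, ℝ) →L[ℝ] Lp ℝ 2 μ :=
  ContinuousMap.toLp 2 μ ℝ

lemma norm_toL2_eq_sqrt_integral (f : C(α, ℝ)) : ‖toL2 μ f‖ = √(∫ x, f x ^ 2 ∂μ) := by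
  rw [← Real.sqrt_sq (norm_nonneg _), ← real_inner_self_eq_norm_sq, L2.inner_def]
  congr 1
  refine integral_congr_ae ?_
  filter_upwards [ContinuousMap.coeFn_toLp (p := 2) (𝕜 := ℝ) μ f] with x hx
  rw [hx, real_inner_self_eq_norm_sq, Real.norm_eq_abs, sq_abs]

lemma norm_toL2_le_norm (hμ : μ univ ≤ 1) (f : C(α, ℝ)) : ‖toL2 μ f‖ ≤ ‖f‖ := by
  have hμ' : measureUnivNNReal μ ≤ 1 := by
    simpa [measureUnivNNReal] using ENNReal.toNNReal_mono ENNReal.one_ne_top hμ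
  calc ‖toL2 μ f‖ ≤ ‖toL2 μ‖ * ‖f‖ := (toL2 μ).le_opNorm f
    _ ≤ 1 * ‖f‖ := by
      gcongr
      refine (ContinuousMap.toLp_norm_le μ).trans ?_
      exact_mod_cast NNReal.rpow_le_one hμ' (by norm_num)
    _ = ‖f‖ := one_mul _

lemma norm_toL2_le_of_forall_abs_le {f g : C(α, ℝ)} (h : ∀ x, |f x| ≤ |g x|) :
    ‖toL2 μ f‖ ≤ ‖toL2 μ g‖ := by
  refine Lp.norm_le_norm_of_ae_le ?_
  filter_upwards [ContinuousMap.coeFn_toLp (p := 2) (𝕜 := ℝ) μ f,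
    ContinuousMap.coeFn_toLp (p := 2) (𝕜 := ℝ) μ g] with x hfx hgx
  rw [hfx, hgx]
  exact h x

lemma norm_toL2_sum_relu_sub_le {ι : Type*} (s : Finset ι) (a : ι → ℝ) (f g : ι → C(α, ℝ)) :
    ‖toL2 μ (∑ i ∈ s, a i • reluMap.comp (f i)) - toL2 μ (∑ i ∈ s, a i • reluMap.comp (g i))‖
      ≤ ∑ i ∈ s, |a i| * ‖toL2 μ (f i) - toL2 μ (g i)‖ := by
  rw [← map_sub, ← Finset.sum_sub_distrib, map_sum]
  refine (norm_sum_le _ _).trans (Finset.sum_le_sum fun i _ => ?_)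
  rw [← smul_sub, map_smul, norm_smul, Real.norm_eq_abs, ← map_sub]
  gcongr
  exact norm_toL2_le_of_forall_abs_le fun x => by simpa using abs_relu_sub_relu_le _ _

end L2

section Maurey

variable {E : Type*} [NormedAddCommGroup E] [InnerProductSpace ℝ E] {ι : Type*}
  {s : Finset ι} {p : ι → ℝ}

lemma exists_le_sum_mul (hp : ∀ i ∈ s, 0 ≤ p i) (hp1 : ∑ i ∈ s, p i = 1) (f : ι → ℝ) :
    ∃ i ∈ s, f i ≤ ∑ j ∈ s, p j * f j := by
  have hs : s.Nonempty := Finset.nonempty_of_sum_ne_zero (by rw [hp1]; exact one_ne_zero)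
  obtain ⟨i, hi, hfi⟩ := s.exists_mem_eq_inf' hs f
  refine ⟨i, hi, ?_⟩
  have := Finset.inf_le_centerMass hp (hp1 ▸ one_pos) (f := f)
  rwa [Finset.centerMass_eq_of_sum_1 _ _ hp1, hfi] at this

lemma sum_mul_norm_add_sub_sq (hp1 : ∑ i ∈ s, p i = 1) (u : ι → E) (e : E) :
    ∑ i ∈ s, p i * ‖e + (u i - ∑ j ∈ s, p j • u j)‖ ^ 2
      = ‖e‖ ^ 2 + ∑ i ∈ s, p i * ‖u i‖ ^ 2 - ‖∑ j ∈ s, p j • u j‖ ^ 2 := by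
  set F := ∑ j ∈ s, p j • u j
  have hexp : ∀ i, ‖e + (u i - F)‖ ^ 2 = ‖e - F‖ ^ 2 + 2 * inner ℝ (e - F) (u i) + ‖u i‖ ^ 2 :=
    fun i => by rw [← norm_add_sq_real]; congr 2; abel
  have he : ‖e‖ ^ 2 = ‖e - F‖ ^ 2 + 2 * inner ℝ (e - F) F + ‖F‖ ^ 2 := by
    rw [← norm_add_sq_real, sub_add_cancel]
  have hF : ∑ i ∈ s, p i * inner ℝ (e - F) (u i) = inner ℝ (e - F) F := by
    simp only [F, inner_sum, inner_smul_right]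
  calc ∑ i ∈ s, p i * ‖e + (u i - F)‖ ^ 2
      = ∑ i ∈ s, (p i * ‖e - F‖ ^ 2 + 2 * (p i * inner ℝ (e - F) (u i)) + p i * ‖u i‖ ^ 2) :=
        Finset.sum_congr rfl fun i _ => by rw [hexp]; ring
    _ = (∑ i ∈ s, p i) * ‖e - F‖ ^ 2 + 2 * ∑ i ∈ s, p i * inner ℝ (e - F) (u i)
          + ∑ i ∈ s, p i * ‖u i‖ ^ 2 := by
        rw [Finset.sum_add_distrib, Finset.sum_add_distrib, ← Finset.sum_mul, ← Finset.mul_sum]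
    _ = _ := by rw [hp1, hF, he]; ring

/-- Maurey's empirical method, derandomized: the `n` samples are chosen greedily, each one
not increasing the second moment by more than the average `b ^ 2` of the random choice. -/
theorem exists_norm_sum_sub_sq_le (hp : ∀ i ∈ s, 0 ≤ p i) (hp1 : ∑ i ∈ s, p i = 1)
    {u : ι → E} {b : ℝ} (hu : ∀ i ∈ s, ‖u i‖ ≤ b) (n : ℕ) :
    ∃ k : ℕ → ι, (∀ j, k j ∈ s) ∧
      ‖∑ j ∈ Finset.range n, u (k j) - (n : ℝ) • ∑ i ∈ s, p i • u i‖ ^ 2 ≤ n * b ^ 2 := by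
  set F := ∑ i ∈ s, p i • u i
  induction n with
  | zero =>
    obtain ⟨i, hi, -⟩ := exists_le_sum_mul hp hp1 0
    exact ⟨fun _ => i, fun _ => hi, by simp⟩
  | succ n ih =>
    obtain ⟨k, hks, hk⟩ := ih
    set e := ∑ j ∈ Finset.range n, u (k j) - (n : ℝ) • F
    obtain ⟨i, hi, hie⟩ := exists_le_sum_mul hp hp1 fun i => ‖e + (u i - F)‖ ^ 2
    have hmoment : ∑ j ∈ s, p j * ‖u j‖ ^ 2 ≤ b ^ 2 := by
      calc ∑ j ∈ s, p j * ‖u j‖ ^ 2 ≤ ∑ j ∈ s, p j * b ^ 2 :=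
            Finset.sum_le_sum fun j hj => by
              gcongr
              · exact hp j hj
              · exact hu j hj
        _ = b ^ 2 := by rw [← Finset.sum_mul, hp1, one_mul]
    refine ⟨Function.update k n i, fun j => ?_, ?_⟩
    · rcases eq_or_ne j n with rfl | hj
      · simpa using hi
      · simpa [hj] using hks j
    have hsum : ∑ j ∈ Finset.range (n + 1), u (Function.update k n i j) - ((n + 1 : ℕ) : ℝ) • F
        = e + (u i - F) := by
      rw [Finset.sum_range_succ, Function.update_self,
        Finset.sum_congr rfl fun j hj => by
          rw [Function.update_of_ne (Finset.mem_range.mp hj).ne]]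
      push_cast
      rw [add_smul, one_smul]
      simp only [e]
      abel
    rw [hsum]
    have := sum_mul_norm_add_sub_sq hp1 u e
    push_cast
    nlinarith [sq_nonneg ‖F‖]

theorem exists_norm_mean_sub_le (hp : ∀ i ∈ s, 0 ≤ p i) (hp1 : ∑ i ∈ s, p i = 1)
    {u : ι → E} {b : ℝ} (hu : ∀ i ∈ s, ‖u i‖ ≤ b) {n : ℕ} (hn : 0 < n) :
    ∃ k : ℕ → ι, (∀ j, k j ∈ s) ∧
      ‖(n : ℝ)⁻¹ • ∑ j ∈ Finset.range n, u (k j) - ∑ i ∈ s, p i • u i‖ ≤ b / √n := by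
  obtain ⟨i, hi, -⟩ := exists_le_sum_mul hp hp1 0
  have hb : 0 ≤ b := (norm_nonneg _).trans (hu i hi)
  have hn' : (0 : ℝ) < n := Nat.cast_pos.mpr hn
  obtain ⟨k, hks, hk⟩ := exists_norm_sum_sub_sq_le hp hp1 hu n
  refine ⟨k, hks, ?_⟩
  have hroot : ‖∑ j ∈ Finset.range n, u (k j) - (n : ℝ) • ∑ i ∈ s, p i • u i‖ ≤ √n * b := by
    rw [← Real.sqrt_sq hb, ← Real.sqrt_mul hn'.le]
    exact Real.le_sqrt_of_sq_le hk
  calc _ = ‖(n : ℝ)⁻¹ • (∑ j ∈ Finset.range n, u (k j) - (n : ℝ) • ∑ i ∈ s, p i • u i)‖ := by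
        rw [smul_sub, smul_smul, inv_mul_cancel₀ hn'.ne', one_smul]
    _ ≤ (n : ℝ)⁻¹ * (√n * b) := by
        rw [norm_smul, Real.norm_of_nonneg (by positivity)]
        gcongr
    _ = b / √n := by rw [← mul_assoc, inv_mul_eq_div, Real.sqrt_div_self', one_div_mul_eq_div]

theorem exists_norm_sign_sample_sub_le (hs : s.Nonempty) (c : ι → ℝ) {u : ι → E} {b : ℝ}
    (hu : ∀ i ∈ s, ‖u i‖ ≤ b) {n : ℕ} (hn : 0 < n) :
    ∃ k : ℕ → ι, (∀ j, k j ∈ s) ∧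
      ‖∑ j ∈ Finset.range n, ((∑ i ∈ s, |c i|) / n * SignType.sign (c (k j))) • u (k j)
          - ∑ i ∈ s, c i • u i‖ ≤ (∑ i ∈ s, |c i|) * b / √n := by
  set M := ∑ i ∈ s, |c i|
  have hM0 : 0 ≤ M := Finset.sum_nonneg fun i _ => abs_nonneg (c i)
  rcases hM0.eq_or_lt with hM | hM
  · have hc : ∀ i ∈ s, c i = 0 := fun i hi => abs_eq_zero.mp
      ((Finset.sum_eq_zero_iff_of_nonneg fun i _ => abs_nonneg _).mp hM.symm i hi)
    refine ⟨fun _ => hs.choose, fun _ => hs.choose_spec, ?_⟩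
    have hsum : ∑ i ∈ s, c i • u i = 0 := Finset.sum_eq_zero fun i hi => by rw [hc i hi, zero_smul]
    simp [← hM, hsum]
  obtain ⟨k, hks, hk⟩ := exists_norm_mean_sub_le (p := fun i => |c i| / M)
    (u := fun i => (M * SignType.sign (c i)) • u i) (b := M * b)
    (fun i _ => by positivity) (by rw [← Finset.sum_div, div_self hM.ne'])
    (fun i hi => by
      rw [norm_smul, Real.norm_eq_abs, abs_mul, abs_of_pos hM, mul_assoc]
      exact mul_le_mul_of_nonneg_left
        (by nlinarith [abs_sign_le_one (c i), abs_nonneg (SignType.sign (c i) : ℝ), hu i hi,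
          norm_nonneg (u i)])
        hM.le) hn
  refine ⟨k, hks, ?_⟩
  have hsample : ∑ j ∈ Finset.range n, (M / n * SignType.sign (c (k j))) • u (k j)
      = (n : ℝ)⁻¹ • ∑ j ∈ Finset.range n, (M * SignType.sign (c (k j))) • u (k j) := by
    rw [Finset.smul_sum]
    refine Finset.sum_congr rfl fun j _ => ?_
    rw [smul_smul]
    ring_nf
  have hmean : ∑ i ∈ s, c i • u i = ∑ i ∈ s, (|c i| / M) • (M * SignType.sign (c i)) • u i :=
    Finset.sum_congr rfl fun i _ => by
      rw [smul_smul, show |c i| / M * (M * SignType.sign (c i)) = |c i| * SignType.sign (c i) by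
        field_simp, abs_mul_sign]
  rwa [hsample, hmean]

end Maurey

section Discretization

theorem exists_simpleFunc_mem_lintegral_enorm_sub_lt {E : Type*} [NormedAddCommGroup E]
    [MeasurableSpace E] [BorelSpace E] {μ : Measure E} [IsFiniteMeasure μ] {S : Set E}
    [TopologicalSpace.SeparableSpace S] (hS0 : 0 ∈ S) {β : ℝ} (hSβ : ∀ v ∈ S, ‖v‖ ≤ β)
    (hμS : μ Sᶜ = 0) {ε : ℝ≥0∞} (hε : 0 < ε) :
    ∃ φ : SimpleFunc E E, (∀ g, φ g ∈ S) ∧ ∫⁻ g, ‖φ g - g‖ₑ ∂μ < ε := by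
  have hS : ∀ᵐ g ∂μ, g ∈ S := by
    filter_upwards [measure_eq_zero_iff_ae_notMem.mp hμS] with g hg
    simpa using hg
  have htend := SimpleFunc.tendsto_approxOn_L1_enorm measurable_id hS0
    (hS.mono fun g hg => subset_closure hg)
    (HasFiniteIntegral.of_bounded (C := β) (hS.mono fun g hg => by simpa using hSβ g hg))
  obtain ⟨n, hn⟩ := (htend.eventually (gt_mem_nhds hε)).exists
  exact ⟨_, SimpleFunc.approxOn_mem measurable_id hS0 n, hn⟩

lemma _root_.MeasureTheory.SimpleFunc.sum_range_measureReal_preimage_singleton {α β : Type*}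
    [MeasurableSpace α] (φ : SimpleFunc α β) (μ : Measure α) [IsFiniteMeasure μ] :
    ∑ y ∈ φ.range, μ.real (φ ⁻¹' {y}) = μ.real univ := by
  simp only [measureReal_def]
  rw [← ENNReal.toReal_sum fun _ _ => measure_ne_top _ _, φ.sum_range_measure_preimage_singleton]

variable {d : ℕ} {K : Set (Fin d → ℝ)} [CompactSpace K]

lemma enorm_integral_relu_sub_sum_le {ρ : Measure C(K, ℝ)} [IsFiniteMeasure ρ]
    (φ : SimpleFunc C(K, ℝ) C(K, ℝ)) {β : ℝ} (hρ : ∀ᵐ g ∂ρ, ‖g‖ ≤ β) (x : K) :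
    ‖∫ g, relu (g x) ∂ρ - ∑ v ∈ φ.range, ρ.real (φ ⁻¹' {v}) * relu (v x)‖ₑ
      ≤ ∫⁻ g, ‖φ g - g‖ₑ ∂ρ := by
  have : BorelSpace C(K, ℝ) := ⟨rfl⟩
  set ψ := φ.map fun v => relu (v x)
  have hint : Integrable (fun g : C(K, ℝ) => relu (g x)) ρ := by
    refine Integrable.of_bound (continuous_relu.comp
      (ContinuousEvalConst.continuous_eval_const x)).aestronglyMeasurable β ?_
    filter_upwards [hρ] with g hg
    exact (abs_relu_le _).trans ((g.norm_coe_le_norm x).trans hg)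
  have hψ : ∫ g, ψ g ∂ρ = ∑ v ∈ φ.range, ρ.real (φ ⁻¹' {v}) * relu (v x) := by
    rw [← SimpleFunc.integral_eq_integral _ (ψ.integrable_of_isFiniteMeasure),
      SimpleFunc.map_integral _ _ (φ.integrable_of_isFiniteMeasure) (by simp)]
    rfl
  rw [← hψ, ← integral_sub hint (ψ.integrable_of_isFiniteMeasure)]
  refine (enorm_integral_le_lintegral_enorm _).trans (lintegral_mono fun g => ?_)
  rw [SimpleFunc.map_apply, Real.enorm_eq_ofReal_abs, ← ofReal_norm, norm_sub_rev]
  exact ENNReal.ofReal_le_ofReal ((abs_relu_sub_relu_le _ _).trans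
    ((g - φ g).norm_coe_le_norm x))

theorem IsBarronRep.exists_finset_relu_approx {H : Set C(K, ℝ)} {g : C(K, ℝ)}
    {μp μn : Measure C(K, ℝ)} (hrep : IsBarronRep K H g μp μn) (hH0 : 0 ∈ H) {β : ℝ}
    (hHβ : ∀ v ∈ H, ‖v‖ ≤ β) {δ : ℝ} (hδ : 0 < δ) :
    ∃ (V : Finset C(K, ℝ)) (c : C(K, ℝ) → ℝ), V.Nonempty ∧ (∀ v ∈ V, v ∈ H) ∧
      ∑ v ∈ V, |c v| ≤ μp.real univ + μn.real univ ∧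
      ‖g - ∑ v ∈ V, c v • reluMap.comp v‖ ≤ δ := by
  obtain ⟨hfp, hfn, hp, hn, hg⟩ := hrep
  have : BorelSpace C(K, ℝ) := ⟨rfl⟩
  obtain ⟨φ, hφH, hφ⟩ := exists_simpleFunc_mem_lintegral_enorm_sub_lt (μ := μp + μn) hH0 hHβ
    (by simp [hp, hn]) (ENNReal.ofReal_pos.mpr hδ)
  have hae : ∀ ρ : Measure C(K, ℝ), ρ Hᶜ = 0 → ∀ᵐ g ∂ρ, ‖g‖ ≤ β := fun ρ hρ => by
    filter_upwards [measure_eq_zero_iff_ae_notMem.mp hρ] with g hg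
    exact hHβ g (by simpa using hg)
  refine ⟨φ.range, fun v => μp.real (φ ⁻¹' {v}) - μn.real (φ ⁻¹' {v}),
    ⟨φ 0, φ.mem_range_self 0⟩, fun v hv => ?_, ?_, ?_⟩
  · obtain ⟨g', rfl⟩ := SimpleFunc.mem_range.mp hv
    exact hφH g'
  · rw [← φ.sum_range_measureReal_preimage_singleton, ← φ.sum_range_measureReal_preimage_singleton,
      ← Finset.sum_add_distrib]
    refine Finset.sum_le_sum fun v _ => (abs_sub _ _).trans_eq ?_
    rw [abs_of_nonneg measureReal_nonneg, abs_of_nonneg measureReal_nonneg]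
  · refine (ContinuousMap.norm_le _ hδ.le).mpr fun x => ?_
    have hx : (g - ∑ v ∈ φ.range, (μp.real (φ ⁻¹' {v}) - μn.real (φ ⁻¹' {v})) •
        reluMap.comp v) x
        = (∫ g, relu (g x) ∂μp - ∑ v ∈ φ.range, μp.real (φ ⁻¹' {v}) * relu (v x))
          - (∫ g, relu (g x) ∂μn - ∑ v ∈ φ.range, μn.real (φ ⁻¹' {v}) * relu (v x)) := by
      simp only [ContinuousMap.sub_apply, ContinuousMap.coe_sum, Finset.sum_apply,
        ContinuousMap.smul_apply, ContinuousMap.comp_apply, reluMap_apply, smul_eq_mul, hg x,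
        sub_mul, Finset.sum_sub_distrib]
      ring
    rw [hx, Real.norm_eq_abs]
    refine (abs_sub _ _).trans (le_of_lt ?_)
    rw [← ENNReal.ofReal_lt_ofReal_iff hδ, ENNReal.ofReal_add (abs_nonneg _) (abs_nonneg _),
      ← Real.enorm_eq_ofReal_abs, ← Real.enorm_eq_ofReal_abs]
    refine lt_of_le_of_lt ?_ hφ
    rw [lintegral_add_measure]
    exact add_le_add (enorm_integral_relu_sub_sum_le φ (hae μp hp) x)
      (enorm_integral_relu_sub_sum_le φ (hae μn hn) x)

end Discretization

lemma norm_inv_one_add_smul_sub_le {E : Type*} [SeminormedAddCommGroup E] [NormedSpace ℝ E]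
    {η : ℝ} (hη : 0 ≤ η) (u v : E) :
    ‖(1 + η)⁻¹ • u - v‖ ≤ (1 + η)⁻¹ * ‖u - v‖ + η * ‖v‖ := by
  have hsplit : (1 + η)⁻¹ • u - v = (1 + η)⁻¹ • (u - v) - (η / (1 + η)) • v := by
    rw [smul_sub, sub_sub, ← add_smul, show (1 + η)⁻¹ + η / (1 + η) = 1 by field_simp, one_smul]
  rw [hsplit]
  refine (norm_sub_le _ _).trans (add_le_add ?_ ?_) <;>
    rw [norm_smul, Real.norm_of_nonneg (by positivity)]
  gcongr
  exact div_le_self hη (by linarith)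

lemma sqrt_integral_netRealize_sub_sq {d : ℕ} {K : Set (Fin d → ℝ)} [CompactSpace K]
    {P : Measure K} [IsFiniteMeasure P] {m L : ℕ} {t : ReluTree d} (ht : t.HasDepth L)
    (hL : 0 < L) (κ : ℝ) (F : C(K, ℝ)) :
    √(∫ x : K, (netRealize d L (fun k => m ^ (L + 1 - k)) (fun i => κ * t.coeff i)
        (ReluTree.flatWeights m L t) x - F x) ^ 2 ∂P)
      = ‖κ • toL2 P (t.evalOn m K) - toL2 P F‖ := by
  rw [← map_smul, ← map_sub, norm_toL2_eq_sqrt_integral]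
  simp [ReluTree.netRealize_flatWeights ht hL]

lemma norm_toL2_evalOn_node_sub_le {d : ℕ} {K : Set (Fin d → ℝ)} [CompactSpace K]
    {P : Measure K} [IsFiniteMeasure P] {m : ℕ} (a : ℕ → ℝ) (t : ℕ → ReluTree d)
    (v : ℕ → C(K, ℝ)) (g : C(K, ℝ)) {e : ℝ}
    (he : ∀ j, ‖toL2 P ((t j).evalOn m K) - toL2 P (v j)‖ ≤ e) :
    ‖toL2 P ((ReluTree.node a t).evalOn m K) - toL2 P g‖
      ≤ (∑ j ∈ Finset.range m, |a j|) * e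
        + ‖toL2 P (∑ j ∈ Finset.range m, a j • reluMap.comp (v j)) - toL2 P g‖ := by
  rw [ReluTree.evalOn_node, Finset.sum_mul]
  refine (norm_sub_le_norm_sub_add_norm_sub _
    (toL2 P (∑ j ∈ Finset.range m, a j • reluMap.comp (v j))) _).trans (add_le_add ?_ le_rfl)
  exact (norm_toL2_sum_relu_sub_le _ _ _ _).trans
    (Finset.sum_le_sum fun j _ => mul_le_mul_of_nonneg_left (he j) (abs_nonneg _))

section Approximation

variable {d : ℕ} {K : Set (Fin d → ℝ)} [CompactSpace K] {P : Measure K} [IsFiniteMeasure P]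
  (hP : P univ ≤ 1) {R : ℝ} (hR : 0 ≤ R) (hK : ∀ x : K, ‖(x : Fin d → ℝ)‖ ≤ R)
  {m : ℕ} (hm : 0 < m)
include hP hR hK hm

theorem exists_relu_combination_approx {ℓ : ℕ} {g : C(K, ℝ)} {τ : ℝ}
    (hg : treeNorm K (ℓ + 1) g < ENNReal.ofReal τ) {δ : ℝ} (hδ : 0 < δ) :
    ∃ (a : ℕ → ℝ) (v : ℕ → C(K, ℝ)), (∀ j, treeNorm K ℓ (v j) ≤ 1) ∧
      ∑ j ∈ Finset.range m, |a j| < τ ∧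
      ‖toL2 P (∑ j ∈ Finset.range m, a j • reluMap.comp (v j)) - toL2 P g‖
        ≤ τ * (R + 1) / √m + δ := by
  obtain ⟨μp, μn, hrep, hmass⟩ := exists_isBarronRep_of_treeNorm_succ_lt hg
  have := hrep.1
  have := hrep.2.1
  have hmass' : μp.real univ + μn.real univ < τ := by
    rw [measureReal_def, measureReal_def,
      ← ENNReal.toReal_add (measure_ne_top _ _) (measure_ne_top _ _)]
    exact ENNReal.toReal_lt_of_lt_ofReal hmass
  obtain ⟨V, c, hV, hVH, hc, hgc⟩ := IsBarronRep.exists_finset_relu_approx hrep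
    (by simp [treeNorm_zero_fun]) (fun v hv => norm_le_of_treeNorm_le_one hR hK hv) hδ
  have hu : ∀ v ∈ V, ‖toL2 P (reluMap.comp v)‖ ≤ R + 1 := fun v hv =>
    ((norm_toL2_le_of_forall_abs_le (g := v) fun x => abs_relu_le (v x)).trans
      (norm_toL2_le_norm hP v)).trans (norm_le_of_treeNorm_le_one hR hK (hVH v hv))
  obtain ⟨k, hkV, hk⟩ := exists_norm_sign_sample_sub_le hV c hu hm
  set M := ∑ v ∈ V, |c v|
  refine ⟨fun j => M / m * SignType.sign (c (k j)), k, fun j => hVH _ (hkV j), ?_, ?_⟩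
  · calc ∑ j ∈ Finset.range m, |M / m * SignType.sign (c (k j))|
        ≤ ∑ _j ∈ Finset.range m, M / m := Finset.sum_le_sum fun j _ => by
          rw [abs_mul, abs_of_nonneg (by positivity)]
          exact mul_le_of_le_one_right (by positivity) (abs_sign_le_one _)
      _ = M := by
          rw [Finset.sum_const, Finset.card_range, nsmul_eq_mul]
          field_simp
      _ < τ := hc.trans_lt hmass'
  · have hsampled : toL2 P (∑ j ∈ Finset.range m,
        (M / m * SignType.sign (c (k j))) • reluMap.comp (k j))
        - toL2 P (∑ v ∈ V, c v • reluMap.comp v)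
        = ∑ j ∈ Finset.range m, (M / m * SignType.sign (c (k j))) • toL2 P (reluMap.comp (k j))
          - ∑ v ∈ V, c v • toL2 P (reluMap.comp v) := by
      simp only [map_sum, map_smul]
    have hdisc : ‖toL2 P (∑ v ∈ V, c v • reluMap.comp v) - toL2 P g‖ ≤ δ := by
      rw [← map_sub]
      exact (norm_toL2_le_norm hP _).trans (norm_sub_rev g _ ▸ hgc)
    calc _ ≤ ‖toL2 P (∑ j ∈ Finset.range m,
            (M / m * SignType.sign (c (k j))) • reluMap.comp (k j))
            - toL2 P (∑ v ∈ V, c v • reluMap.comp v)‖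
          + ‖toL2 P (∑ v ∈ V, c v • reluMap.comp v) - toL2 P g‖ :=
            norm_sub_le_norm_sub_add_norm_sub _ _ _
      _ ≤ M * (R + 1) / √m + δ := by
          rw [hsampled]
          exact add_le_add hk hdisc
      _ ≤ τ * (R + 1) / √m + δ := by
          gcongr
          exact hc.trans hmass'.le

theorem exists_tree_approx : ∀ (ℓ : ℕ) {g : C(K, ℝ)} {τ : ℝ},
    treeNorm K ℓ g < ENNReal.ofReal τ → ∀ {ε : ℝ}, 0 < ε →
      ∃ t : ReluTree d, t.HasDepth ℓ ∧ t.pathNorm m ≤ τ ∧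
        ‖toL2 P (t.evalOn m K) - toL2 P g‖ ≤ τ * (R + 1) * ℓ / √m + ε
  | 0, g, τ, hg, ε, hε => by
    obtain ⟨w, b, hwb, hnorm⟩ := exists_affine_of_treeNorm_zero_lt hg
    have heval : (ReluTree.leaf w b).evalOn m K = g := by
      ext x
      simp [ReluTree.eval, hwb x]
    refine ⟨.leaf w b, .leaf w b, ?_, by simp [heval, hε.le]⟩
    exact ((ENNReal.ofReal_lt_ofReal_iff'.mp hnorm).1).le
  | ℓ + 1, g, τ, hg, ε, hε => by
    have hτ : 0 < τ := ENNReal.ofReal_pos.mp (zero_le.trans_lt hg)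
    obtain ⟨a, v, hv, ha, hav⟩ := exists_relu_combination_approx hP hR hK hm hg (half_pos hε)
    set S := ∑ j ∈ Finset.range m, |a j|
    -- The children get the norm budget `τc` and the slack `ε / (2 * τ)`: weighted by the
    -- `|a j|`, of total `S < τ`, they stay within `τ` and `ε / 2`.
    obtain ⟨τc, hτc, hSτc⟩ : ∃ τc, 1 < τc ∧ S * τc ≤ τ :=
      ⟨1 + (τ - S) / τ, by have := div_pos (sub_pos.mpr ha) hτ; linarith, by
        rw [mul_add, mul_one, mul_div_assoc', add_div' _ _ _ hτ.ne', div_le_iff₀ hτ]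
        nlinarith [sq_nonneg (τ - S)]⟩
    have hchild : ∀ j, ∃ t : ReluTree d, t.HasDepth ℓ ∧ t.pathNorm m ≤ τc ∧
        ‖toL2 P (t.evalOn m K) - toL2 P (v j)‖ ≤ τc * (R + 1) * ℓ / √m + ε / (2 * τ) :=
      fun j => exists_tree_approx ℓ ((hv j).trans_lt (by simpa using hτc)) (by positivity)
    choose t ht hpath herr using hchild
    refine ⟨.node a t, .node a t ht, ?_, ?_⟩
    · calc ∑ j ∈ Finset.range m, |a j| * (t j).pathNorm m ≤ ∑ j ∈ Finset.range m, |a j| * τc :=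
            Finset.sum_le_sum fun j _ => mul_le_mul_of_nonneg_left (hpath j) (abs_nonneg _)
        _ ≤ τ := by rwa [← Finset.sum_mul]
    · calc _ ≤ S * (τc * ((R + 1) * ℓ / √m) + ε / (2 * τ)) + (τ * (R + 1) / √m + ε / 2) :=
            (norm_toL2_evalOn_node_sub_le a t v g fun j => (herr j).trans_eq (by ring)).trans
              (add_le_add le_rfl hav)
        _ ≤ τ * ((R + 1) * ℓ / √m) + τ * (ε / (2 * τ)) + (τ * (R + 1) / √m + ε / 2) := by
            rw [mul_add, ← mul_assoc]
            gcongr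
        _ = τ * (R + 1) * ↑(ℓ + 1) / √m + ε := by
            field_simp
            push_cast
            ring

theorem exists_network_approx {L : ℕ} (hL : 0 < L) (F : C(K, ℝ)) (hF : treeNorm K L F ≠ ⊤) :
    ∃ (c : ℕ → ℝ) (a : ℕ → ℕ → ℕ → ℝ),
      √(∫ x : K, (netRealize d L (fun ℓ => m ^ (L + 1 - ℓ)) c a x - F x) ^ 2 ∂P)
        ≤ L * (2 + R) * (treeNorm K L F).toReal / √m ∧
      pathProxy d L (fun ℓ => m ^ (L + 1 - ℓ)) c a ≤ (treeNorm K L F).toReal := by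
  have hFτ := norm_le_treeNorm_toReal hR hK hF
  obtain ⟨τ, hτ0, hτ⟩ : ∃ τ, 0 ≤ τ ∧ treeNorm K L F = ENNReal.ofReal τ :=
    ⟨_, ENNReal.toReal_nonneg, (ENNReal.ofReal_toReal hF).symm⟩
  rw [hτ, ENNReal.toReal_ofReal hτ0] at hFτ ⊢
  rcases hτ0.eq_or_lt with rfl | hτ0
  · have hF0 : F = 0 := norm_le_zero_iff.mp (by simpa using hFτ)
    refine ⟨0, 0, ?_, ?_⟩ <;> simp [netRealize, pathProxy, hF0]
  -- `η` is chosen so that the cost `η (R + 2) τ` of the rescaling below is the extra `L τ / √m`.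
  set η := L / ((R + 2) * √m)
  have hη : 0 < η := by positivity
  obtain ⟨t, ht, hpath, herr⟩ := exists_tree_approx hP hR hK hm L (g := F) (τ := τ * (1 + η))
    (by rw [hτ, ENNReal.ofReal_lt_ofReal_iff (by positivity)]; nlinarith) (ε := η * τ)
    (by positivity)
  refine ⟨fun i => (1 + η)⁻¹ * t.coeff i, ReluTree.flatWeights m L t, ?_, ?_⟩
  · rw [sqrt_integral_netRealize_sub_sq ht hL]
    calc _ ≤ (1 + η)⁻¹ * (τ * (1 + η) * (R + 1) * L / √m + η * τ) + η * ‖toL2 P F‖ :=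
          (norm_inv_one_add_smul_sub_le hη.le _ _).trans (by gcongr)
      _ ≤ τ * (R + 1) * L / √m + η * τ + η * ((R + 1) * τ) := by
          have hη1 : (1 + η)⁻¹ * (η * τ) ≤ η * τ :=
            mul_le_of_le_one_left (by positivity) (inv_le_one_of_one_le₀ (by linarith))
          rw [mul_add, show (1 + η)⁻¹ * (τ * (1 + η) * (R + 1) * L / √m) = τ * (R + 1) * L / √m
            by field_simp]
          gcongr
          exact (norm_toL2_le_norm hP F).trans hFτ
      _ = L * (2 + R) * τ / √m := by
          simp only [η]
          field_simp
          ring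
  · rw [ReluTree.pathProxy_flatWeights ht hL, abs_inv, abs_of_pos (by positivity),
      inv_mul_le_iff₀ (by positivity)]
    linarith

end Approximation

lemma isClosed_msupport {d : ℕ} (P : Measure (Fin d → ℝ)) : IsClosed (msupport P) := by
  rw [← isOpen_compl_iff, isOpen_iff_forall_mem_open]
  intro x hx
  simp only [msupport, mem_compl_iff, mem_ofPred_eq, not_forall, not_lt, nonpos_iff_eq_zero] at hx
  obtain ⟨U, hU, hxU, hU0⟩ := hx
  exact ⟨U, fun y hy hy' => (hy' U hU hy).ne' hU0, hU, hxU⟩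

end DirectApproximation

end

open DirectApproximation in
/-- **Direct approximation theorem.** Let `ℙ` be a probability measure with
support contained in `B_R(0)` (for the `ℓ∞` norm), `L ≥ 1`, `f ∈ W^L(spt ℙ)`, `m ≥ 1`.
Then there is a finite ReLU network `f_m` with `L` hidden layers of widths
`m, m², …, m^L` (outermost to innermost) such that
`‖f_m − f‖_{L²(ℙ)} ≤ L(2+R)‖f‖_{W^L}/√m` and whose path-norm proxy is at most
`‖f‖_{W^L}`. -/
theorem direct_approximation {d : ℕ} (P : Measure (Fin d → ℝ)) [IsProbabilityMeasure P]
    (R : ℝ) (hR : 0 < R) (hsupp : msupport P ⊆ Metric.closedBall 0 R)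
    (L : ℕ) (hL : 1 ≤ L)
    (F : C(msupport P, ℝ)) (hF : treeNorm (msupport P) L F ≠ ⊤)
    (m : ℕ) (hm : 0 < m) :
    ∃ (c : ℕ → ℝ) (a : ℕ → ℕ → ℕ → ℝ),
      Real.sqrt (∫ x : msupport P,
          (netRealize d L (fun ℓ => m ^ (L + 1 - ℓ)) c a (x : Fin d → ℝ) - F x) ^ 2
          ∂(P.comap Subtype.val))
        ≤ L * (2 + R) * (treeNorm (msupport P) L F).toReal / Real.sqrt m ∧
      pathProxy d L (fun ℓ => m ^ (L + 1 - ℓ)) c a ≤ (treeNorm (msupport P) L F).toReal := by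
  have : CompactSpace (msupport P) := isCompact_iff_compactSpace.mp
    ((isCompact_closedBall 0 R).of_isClosed_subset (isClosed_msupport P) hsupp)
  exact exists_network_approx
    ((Measure.comap_apply_le _ _ nullMeasurableSet_univ).trans prob_le_one) hR.le
    (fun x => mem_closedBall_zero_iff.mp (hsupp x.2)) hm (by omega) F hF
end
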